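/- arXiv:2304.02630 — 8 statements merged into one kernel-verified Lean document; each statement's English description precedes it below -/
import Mathlib

section
/- Let q be an odd prime power and F a finite field with q elements. An element g of GL₂(F) is conjugate in GL₂(F) to −g if and only if the trace of g equals 0. -/
open Matrix

/-- Helper: if `m` anticommutes with `↑g` and has nonzero determinant, then `g` is
conjugate to `-g` in `GL (Fin 2) F`. -/
lemma isConj_neg_of_anticommute {F : Type*} [Field F] (g : GL (Fin 2) F)
    (m : Matrix (Fin 2) (Fin 2) F) (hdm : m.det ≠ 0)
    (h : m * (g : Matrix (Fin 2) (Fin 2) F) = (-(g : Matrix (Fin 2) (Fin 2) F)) * m) :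
    IsConj g (-g) := by
  refine isConj_iff.mpr ⟨Matrix.GeneralLinearGroup.mkOfDetNeZero m hdm, ?_⟩
  rw [mul_inv_eq_iff_eq_mul]
  apply Units.ext
  push_cast
  exact h

/-- An element `g` of `GL₂(F)`, for `F` a finite field of odd cardinality, is conjugate to `-g`
if and only if `g` has trace zero. -/
theorem conj_neg_iff_trace_eq_zero (F : Type*) [Field F] [Fintype F]
    (hq : Odd (Fintype.card F)) (g : GL (Fin 2) F) :
    IsConj g (-g) ↔ Matrix.trace (g : Matrix (Fin 2) (Fin 2) F) = 0 := by
  have hchar : ringChar F ≠ 2 := by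
    intro h
    have h2 := FiniteField.even_card_iff_char_two.mp h
    rw [Nat.odd_iff] at hq
    omega
  have h2 : (2 : F) ≠ 0 := Ring.two_ne_zero hchar
  set M : Matrix (Fin 2) (Fin 2) F := (g : Matrix (Fin 2) (Fin 2) F) with hM
  constructor
  · intro hconj
    obtain ⟨c, hc⟩ := isConj_iff.mp hconj
    have hm : ((c : Matrix (Fin 2) (Fin 2) F)) * M * ((c⁻¹ : GL (Fin 2) F) : Matrix (Fin 2) (Fin 2) F) = -M := by
      rw [hM]
      simpa [Units.val_mul] using congrArg Units.val hc
    have ht := congrArg Matrix.trace hm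
    rw [Matrix.trace_units_conj c M, Matrix.trace_neg] at ht
    have : (2 : F) * Matrix.trace M = 0 := by linear_combination ht
    exact (mul_eq_zero.mp this).resolve_left h2
  · intro ht
    have h11 : M 1 1 = -(M 0 0) := by
      rw [Matrix.trace_fin_two] at ht
      linear_combination ht
    set a := M 0 0
    set b := M 0 1
    set c := M 1 0
    have hMe : M = !![a, b; c, -a] := by
      rw [← h11]
      exact Matrix.etaExpand_eq M |>.symm ▸ (Matrix.eta_fin_two M)
    by_cases hb : b ≠ 0
    · apply isConj_neg_of_anticommute g !![b, 0; -2*a, -b]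
      · simp [Matrix.det_fin_two_of]
        intro h; exact hb h
      · rw [← hM, hMe]
        ext i j
        fin_cases i <;> fin_cases j <;>
          simp [Matrix.mul_apply, Fin.sum_univ_two] <;> ring
    · by_cases hc : c ≠ 0
      · apply isConj_neg_of_anticommute g !![c, -2*a; 0, -c]
        · simp [Matrix.det_fin_two_of]
          intro h; exact hc h
        · rw [← hM, hMe]
          ext i j
          fin_cases i <;> fin_cases j <;>
            simp [Matrix.mul_apply, Fin.sum_univ_two] <;> ring
      · apply isConj_neg_of_anticommute g !![0, 1; 1, 0]
        · simp [Matrix.det_fin_two_of]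
        · push_neg at hb hc
          rw [← hM, hMe, hb, hc]
          ext i j
          fin_cases i <;> fin_cases j <;>
            simp [Matrix.mul_apply, Fin.sum_univ_two]
end

section
/- Every element of SO₄(F) is conjugate in SO₄(F) to a class [(g,h)] with det g = det h, where each of g and h is of one of the following four forms: a scalar matrix aI₂ with a ∈ F^×; a matrix with diagonal entries both equal to some a ∈ F^×, upper-right entry γ ∈ F^× and lower-left entry 0; a diagonal matrix diag(a,b) with a ≠ b in F^×; or an invertible matrix whose characteristic polynomial is irreducible over F. -/
set_option linter.unusedSectionVars false

open Matrix

variable (F : Type*) [Field F] [Fintype F] [DecidableEq F]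

/-- The group `GL_{2,2}(F)` of pairs of invertible 2×2 matrices with equal determinant. -/
def GL22 : Subgroup (GL (Fin 2) F × GL (Fin 2) F) where
  carrier := {p | Matrix.GeneralLinearGroup.det p.1 = Matrix.GeneralLinearGroup.det p.2}
  one_mem' := by simp
  mul_mem' := by
    intro a b ha hb
    simp only [Set.mem_setOf_eq, Prod.fst_mul, Prod.snd_mul, _root_.map_mul] at *
    rw [ha, hb]
  inv_mem' := by
    intro a ha
    simp only [Set.mem_setOf_eq, Prod.fst_inv, Prod.snd_inv, map_inv] at *
    rw [ha]

/-- The scalar matrix `aI₂` as an element of `GL₂(F)`. -/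
noncomputable def sc (a : Fˣ) : GL (Fin 2) F := Units.map (Matrix.scalar (Fin 2)).toMonoidHom a

lemma sc_pair_mem (a : Fˣ) : (sc F a, sc F a) ∈ GL22 F := rfl

/-- The central embedding `a ↦ (aI₂, aI₂)`. -/
noncomputable def scalarHom : Fˣ →* GL22 F where
  toFun a := ⟨(sc F a, sc F a), sc_pair_mem F a⟩
  map_one' := by
    apply Subtype.ext
    apply Prod.ext <;> simp [sc]
  map_mul' a b := by
    apply Subtype.ext
    apply Prod.ext <;> simp [sc]

instance scalarHom_range_normal : (scalarHom F).range.Normal := by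
  constructor
  rintro n ⟨a, rfl⟩ g
  refine ⟨a, ?_⟩
  have hc : g * scalarHom F a = scalarHom F a * g := by
    apply Subtype.ext
    apply Prod.ext <;>
    · apply Units.ext
      exact (Matrix.scalar_commute (a : F) (fun r => mul_comm _ _) _).symm
  rw [hc, mul_assoc, mul_inv_cancel, mul_one]

/-- `SO₄(F)` as the quotient of `GL_{2,2}(F)` by the diagonally embedded scalars. -/
abbrev SO4 := GL22 F ⧸ (scalarHom F).range

/-- The class `[(g,h)]` of a pair in `SO₄(F)`. -/
noncomputable def cls : GL22 F → SO4 F := QuotientGroup.mk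


/-- `g` is of one of the four standard forms: a scalar matrix `aI₂` with `a ∈ F^×`; an upper
triangular matrix with equal diagonal entries `a ∈ F^×` and upper-right entry `γ ∈ F^×`;
a diagonal matrix `diag(a,b)` with `a ≠ b` in `F^×`; or a matrix with irreducible
characteristic polynomial. -/
def IsStdForm {F : Type*} [Field F] [Fintype F] [DecidableEq F] (g : GL (Fin 2) F) : Prop :=
  (∃ a : Fˣ, (g : Matrix (Fin 2) (Fin 2) F) = (a : F) • (1 : Matrix (Fin 2) (Fin 2) F)) ∨
  (∃ a γ : Fˣ, (g : Matrix (Fin 2) (Fin 2) F) = !![(a : F), (γ : F); 0, (a : F)]) ∨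
  (∃ a b : Fˣ, a ≠ b ∧ (g : Matrix (Fin 2) (Fin 2) F) = Matrix.diagonal ![(a : F), (b : F)]) ∨
  Irreducible (Matrix.charpoly (g : Matrix (Fin 2) (Fin 2) F))

section Aux
open Polynomial

lemma conj_to_matrix (g : GL (Fin 2) F) (b : Module.Basis (Fin 2) F (Fin 2 → F))
    (A : Matrix (Fin 2) (Fin 2) F)
    (h : ∀ j, (g : Matrix (Fin 2) (Fin 2) F) *ᵥ (b j) = A 0 j • b 0 + A 1 j • b 1) :
    ∃ u : GL (Fin 2) F, ((u * g * u⁻¹ : GL (Fin 2) F) : Matrix (Fin 2) (Fin 2) F) = A := by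
  set e := Pi.basisFun F (Fin 2) with he
  set P := e.toMatrix ⇑b with hP
  set Q := b.toMatrix ⇑e with hQ
  have hPQ : P * Q = 1 := e.toMatrix_mul_toMatrix_flip b
  have hQP : Q * P = 1 := b.toMatrix_mul_toMatrix_flip e
  have key : (g : Matrix (Fin 2) (Fin 2) F) * P = P * A := by
    ext i j
    have hji := congrFun (h j) i
    simp only [Matrix.mulVec, dotProduct, Fin.sum_univ_two, Pi.add_apply, Pi.smul_apply,
      smul_eq_mul] at hji
    simp only [Matrix.mul_apply, Fin.sum_univ_two, hP, he, Module.Basis.toMatrix_apply, Pi.basisFun_repr]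
    linear_combination hji
  refine ⟨⟨Q, P, hQP, hPQ⟩, ?_⟩
  have : ((⟨Q, P, hQP, hPQ⟩ : GL (Fin 2) F)⁻¹ : GL (Fin 2) F) = ⟨P, Q, hPQ, hQP⟩ := by
    ext; rfl
  rw [this]
  show Q * (g : Matrix (Fin 2) (Fin 2) F) * P = A
  rw [mul_assoc, key, ← mul_assoc, hQP, one_mul]

/-- The unit `diag(c,1)`. -/
def Dunit (c : Fˣ) : GL (Fin 2) F :=
  ⟨!![(c : F), 0; 0, 1], !![(c⁻¹ : Fˣ), 0; 0, 1],
    by ext i j; fin_cases i <;> fin_cases j <;> simp [Matrix.mul_fin_two, Matrix.one_fin_two],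
    by ext i j; fin_cases i <;> fin_cases j <;> simp [Matrix.mul_fin_two, Matrix.one_fin_two]⟩

lemma charpoly_conj (P : GL (Fin 2) F) (M : Matrix (Fin 2) (Fin 2) F) :
    Matrix.charpoly ((P : Matrix (Fin 2) (Fin 2) F) * M * ((P⁻¹ : GL (Fin 2) F) : Matrix (Fin 2) (Fin 2) F))
      = M.charpoly := by
  have hPQ : (P : Matrix (Fin 2) (Fin 2) F) * ((P⁻¹ : GL (Fin 2) F) : Matrix (Fin 2) (Fin 2) F) = 1 := by
    rw [← Units.val_mul, mul_inv_cancel, Units.val_one]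
  have hQP : ((P⁻¹ : GL (Fin 2) F) : Matrix (Fin 2) (Fin 2) F) * (P : Matrix (Fin 2) (Fin 2) F) = 1 := by
    rw [← Units.val_mul, inv_mul_cancel, Units.val_one]
  set Pm := (P : Matrix (Fin 2) (Fin 2) F)
  set Qm := ((P⁻¹ : GL (Fin 2) F) : Matrix (Fin 2) (Fin 2) F)
  have hch : charmatrix (Pm * M * Qm) =
      Pm.map C * charmatrix M * Qm.map C := by
    unfold charmatrix
    rw [Matrix.mul_sub, Matrix.sub_mul]
    congr 1
    · have hd : (diagonal fun _ : Fin 2 => (X : F[X])) = (X : F[X]) • (1 : Matrix (Fin 2) (Fin 2) F[X]) := by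
        rw [Matrix.smul_eq_diagonal_mul, mul_one]
      rw [Matrix.scalar_apply, hd, Matrix.mul_smul, mul_one, Matrix.smul_mul, ← Matrix.map_mul,
        hPQ, Matrix.map_one (⇑C) C.map_zero C.map_one]
    · simp [Matrix.map_mul]
  rw [Matrix.charpoly, hch, det_mul, det_mul, mul_comm, ← mul_assoc, ← det_mul, ← Matrix.map_mul, hQP]
  simp [Matrix.charpoly]

lemma diagonal_pair (a b : F) : Matrix.diagonal ![a, b] = !![a, 0; 0, b] := by
  ext i j; fin_cases i <;> fin_cases j <;> simp [Matrix.diagonal]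

lemma isStdForm_diag_conj (c : Fˣ) (g : GL (Fin 2) F) (hg : IsStdForm g) :
    IsStdForm (Dunit F c * g * (Dunit F c)⁻¹) := by
  have hinv : ((Dunit F c)⁻¹ : GL (Fin 2) F).val = !![((c⁻¹ : Fˣ) : F), 0; 0, 1] := rfl
  have hval : (Dunit F c * g * (Dunit F c)⁻¹ : GL (Fin 2) F).val
      = !![(c : F), 0; 0, 1] * (g : Matrix (Fin 2) (Fin 2) F) * !![((c⁻¹ : Fˣ) : F), 0; 0, 1] := by
    rw [Units.val_mul, Units.val_mul, hinv]; rfl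
  rcases hg with ⟨a, ha⟩ | ⟨a, γ, ha⟩ | ⟨a, b, hab, ha⟩ | hirr
  · left
    refine ⟨a, ?_⟩
    rw [hval, ha, Matrix.mul_smul, Matrix.smul_mul, mul_one]
    congr 1
    ext i j; fin_cases i <;> fin_cases j <;> simp [Matrix.mul_fin_two, Matrix.one_fin_two]
  · right; left
    refine ⟨a, c * γ, ?_⟩
    rw [hval, ha]
    ext i j; fin_cases i <;> fin_cases j <;>
      simp [Matrix.mul_fin_two] <;> field_simp <;> ring
  · right; right; left
    refine ⟨a, b, hab, ?_⟩
    rw [hval, ha, diagonal_pair]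
    ext i j; fin_cases i <;> fin_cases j <;>
      simp [Matrix.mul_fin_two] <;> field_simp <;> ring
  · right; right; right
    rw [hval,
      show (!![(c : F), 0; 0, 1] : Matrix (Fin 2) (Fin 2) F)
        = ((Dunit F c : GL (Fin 2) F) : Matrix (Fin 2) (Fin 2) F) from rfl,
      ← hinv, charpoly_conj]
    exact hirr

/-- eigenvector existence -/
lemma exists_eigen (M : Matrix (Fin 2) (Fin 2) F) (t : F)
    (ht : t * t - M.trace * t + M.det = 0) :
    ∃ v : Fin 2 → F, v ≠ 0 ∧ M *ᵥ v = t • v := by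
  have hdet0 : (M - t • 1).det = 0 := by
    have h00 : (M - t • 1) 0 0 = M 0 0 - t := by simp
    have h01 : (M - t • 1) 0 1 = M 0 1 := by simp [Matrix.one_apply_ne]
    have h10 : (M - t • 1) 1 0 = M 1 0 := by simp [Matrix.one_apply_ne]
    have h11 : (M - t • 1) 1 1 = M 1 1 - t := by simp
    rw [trace_fin_two, det_fin_two] at ht
    rw [det_fin_two, h00, h01, h10, h11]
    linear_combination ht
  obtain ⟨v, hv0, hv⟩ := Matrix.exists_mulVec_eq_zero_iff.mpr hdet0
  refine ⟨v, hv0, ?_⟩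
  rw [Matrix.sub_mulVec, sub_eq_zero] at hv
  rw [hv, Matrix.smul_mulVec, Matrix.one_mulVec]

lemma exists_conj_stdForm (g : GL (Fin 2) F) :
    ∃ u : GL (Fin 2) F, IsStdForm (u * g * u⁻¹) := by
  set M := (g : Matrix (Fin 2) (Fin 2) F) with hM
  have hdetu : IsUnit M.det := (Matrix.isUnit_iff_isUnit_det M).mp ⟨g, rfl⟩
  have hdet_ne : M.det ≠ 0 := hdetu.ne_zero
  by_cases hirr : Irreducible M.charpoly
  · exact ⟨1, Or.inr (Or.inr (Or.inr (by simpa using hirr)))⟩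
  have hnd : M.charpoly.natDegree = 2 := by
    rw [Matrix.charpoly_natDegree_eq_dim, Fintype.card_fin]
  obtain ⟨c₁, c₂, h0, h1⟩ := ((M.charpoly_monic).not_irreducible_iff_exists_add_mul_eq_coeff hnd).mp hirr
  obtain ⟨a, ha'⟩ : ∃ a : F, a = -c₁ := ⟨-c₁, rfl⟩
  obtain ⟨b, hb'⟩ : ∃ b : F, b = -c₂ := ⟨-c₂, rfl⟩
  have hdet : M.det = a * b := by
    have := M.det_eq_sign_charpoly_coeff
    rw [Fintype.card_fin] at this
    rw [this, h0, ha', hb']; ring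
  have htr : M.trace = a + b := by
    have := M.trace_eq_neg_charpoly_coeff
    rw [Fintype.card_fin] at this
    rw [this, h1, ha', hb']; ring
  have ha0 : a ≠ 0 := fun h => hdet_ne (by rw [hdet, h, zero_mul])
  have hb0 : b ≠ 0 := fun h => hdet_ne (by rw [hdet, h, mul_zero])
  have haroot : a * a - M.trace * a + M.det = 0 := by rw [htr, hdet]; ring
  have hfin : (Module.finrank F (Fin 2 → F)) = 2 := by simp
  by_cases hab : a = b
  · -- repeated root case
    subst hab
    have htr2 : M.trace = 2 * a := by rw [htr]; ring
    have hdet2 : M.det = a * a := hdet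
    by_cases hsc : M = (a : F) • (1 : Matrix (Fin 2) (Fin 2) F)
    · refine ⟨1, Or.inl ⟨Units.mk0 a ha0, ?_⟩⟩
      simpa using hsc
    · set N := M - a • (1 : Matrix (Fin 2) (Fin 2) F) with hN
      have hNne : N ≠ 0 := sub_ne_zero_of_ne hsc
      have htr2' : M 0 0 + M 1 1 = 2 * a := by rw [trace_fin_two] at htr2; exact htr2
      have hdet2' : M 0 0 * M 1 1 - M 0 1 * M 1 0 = a * a := by
        rw [det_fin_two] at hdet2; exact hdet2
      have hN2 : N * N = 0 := by
        ext i j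
        fin_cases i <;> fin_cases j <;>
          · simp only [hN, Matrix.mul_apply, Fin.sum_univ_two, Matrix.sub_apply,
              Matrix.smul_apply, Matrix.one_apply, smul_eq_mul, Matrix.zero_apply]
            norm_num
            try linear_combination M 0 0 * htr2' - hdet2'
            try linear_combination M 0 1 * htr2'
            try linear_combination M 1 0 * htr2'
            try linear_combination M 1 1 * htr2' - hdet2'
      obtain ⟨v, hv⟩ : ∃ v : Fin 2 → F, N *ᵥ v ≠ 0 := by
        by_contra h'
        push_neg at h'
        apply hNne
        ext i j
        simpa using congrFun (h' (Pi.single j 1)) i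
      set w := N *ᵥ v with hw
      have hv0 : v ≠ 0 := by
        intro h'
        apply hv
        rw [hw, h', Matrix.mulVec_zero]
      have hNw : N *ᵥ w = 0 := by
        rw [hw, Matrix.mulVec_mulVec, hN2, Matrix.zero_mulVec]
      have hMw : M *ᵥ w = a • w := by
        have : (M - a • 1) *ᵥ w = 0 := hNw
        rw [Matrix.sub_mulVec, sub_eq_zero] at this
        rw [this, Matrix.smul_mulVec, Matrix.one_mulVec]
      have hMv : M *ᵥ v = a • v + w := by
        have : (M - a • 1) *ᵥ v = w := rfl
        rw [Matrix.sub_mulVec] at this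
        have h2 : M *ᵥ v = w + (a • 1 : Matrix (Fin 2) (Fin 2) F) *ᵥ v :=
          eq_add_of_sub_eq this
        rw [h2, Matrix.smul_mulVec, Matrix.one_mulVec]
        abel
      have hli : LinearIndependent F ![w, v] := by
        rw [linearIndependent_fin2]
        refine ⟨by simpa using hv0, ?_⟩
        intro c hc
        simp only [Matrix.cons_val_one, Matrix.head_cons, Matrix.cons_val_zero] at hc
        have hstep : N *ᵥ (c • v) = c • (N *ᵥ v) := Matrix.mulVec_smul _ _ _
        rw [hc, hNw] at hstep
        rcases smul_eq_zero.mp hstep.symm with h' | h'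
        · exact hv (show w = 0 by rw [← hc, h', zero_smul])
        · exact hv h'
      let b2 : Module.Basis (Fin 2) F (Fin 2 → F) :=
        basisOfLinearIndependentOfCardEqFinrank hli (by simp)
      have hb2 : ⇑b2 = ![w, v] := coe_basisOfLinearIndependentOfCardEqFinrank hli _
      have hcols : ∀ j, M *ᵥ (b2 j) = (!![a, 1; 0, a] : Matrix (Fin 2) (Fin 2) F) 0 j • b2 0
          + (!![a, 1; 0, a] : Matrix (Fin 2) (Fin 2) F) 1 j • b2 1 := by
        intro j
        fin_cases j <;>
          · simp [hb2, hMw, hMv]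
            try abel
      obtain ⟨u, hu⟩ := conj_to_matrix F g b2 !![a, 1; 0, a] hcols
      exact ⟨u, Or.inr (Or.inl ⟨Units.mk0 a ha0, 1, by rw [hu]; norm_num⟩)⟩
  · -- distinct roots
    have hbroot : b * b - M.trace * b + M.det = 0 := by rw [htr, hdet]; ring
    obtain ⟨v, hv0, hv⟩ := exists_eigen F M a haroot
    obtain ⟨w, hw0, hw⟩ := exists_eigen F M b hbroot
    have hli : LinearIndependent F ![v, w] := by
      rw [linearIndependent_fin2]
      constructor
      · simpa using hw0
      · intro c hc
        simp only [Matrix.cons_val_one, Matrix.head_cons, Matrix.cons_val_zero] at hc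
        have h1 : M *ᵥ (c • w) = (c * b) • w := by
          rw [Matrix.mulVec_smul, hw, smul_smul]
        have h2 : M *ᵥ (c • w) = (a * c) • w := by
          rw [hc, hv, ← hc, smul_smul]
        have h3 : (c * b - a * c) • w = 0 := by
          rw [sub_smul, ← h1, ← h2, sub_self]
        rcases smul_eq_zero.mp h3 with h' | h'
        · have hc0 : c = 0 := by
            rcases mul_eq_zero.mp (show c * (b - a) = 0 by linear_combination h') with h'' | h''
            · exact h''
            · exact absurd (sub_eq_zero.mp h'').symm hab
          apply hv0
          rw [← hc, hc0, zero_smul]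
        · exact hw0 h'
    let b2 : Module.Basis (Fin 2) F (Fin 2 → F) :=
      basisOfLinearIndependentOfCardEqFinrank hli (by simp)
    have hb2 : ⇑b2 = ![v, w] := coe_basisOfLinearIndependentOfCardEqFinrank hli _
    have hcols : ∀ j, M *ᵥ (b2 j) = (Matrix.diagonal ![a, b]) 0 j • b2 0
        + (Matrix.diagonal ![a, b]) 1 j • b2 1 := by
      intro j
      fin_cases j <;>
        simp [hb2, hv, hw, Matrix.diagonal]
    obtain ⟨u, hu⟩ := conj_to_matrix F g b2 (Matrix.diagonal ![a, b]) hcols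
    refine ⟨u, Or.inr (Or.inr (Or.inl ⟨Units.mk0 a ha0, Units.mk0 b hb0, ?_, by rw [hu]; simp⟩))⟩
    intro h'
    exact hab (by simpa using congrArg Units.val h')

end Aux

/-- Every element of `SO₄(F)` is conjugate to a class `[(g,h)]` (with `det g = det h`) in which
both `g` and `h` are of one of the four standard forms. -/
theorem conj_stdForm (hq : Odd (Fintype.card F)) (x : SO4 F) :
    ∃ p : GL22 F, IsStdForm p.val.1 ∧ IsStdForm p.val.2 ∧ IsConj x (cls F p) := by
  obtain ⟨p0, rfl⟩ := QuotientGroup.mk_surjective x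
  obtain ⟨⟨g, h⟩, hdet⟩ := p0
  obtain ⟨u, hu⟩ := exists_conj_stdForm F g
  obtain ⟨u', hu'⟩ := exists_conj_stdForm F h
  set c : Fˣ := Matrix.GeneralLinearGroup.det u' * (Matrix.GeneralLinearGroup.det u)⁻¹ with hc
  set U : GL (Fin 2) F := Dunit F c * u with hU
  have hdetD : Matrix.GeneralLinearGroup.det (Dunit F c) = c := by
    apply Units.ext
    rw [Matrix.GeneralLinearGroup.val_det_apply]
    show Matrix.det (!![(c : F), 0; 0, 1]) = (c : F)
    rw [Matrix.det_fin_two_of]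
    ring
  have hdetU : Matrix.GeneralLinearGroup.det U = Matrix.GeneralLinearGroup.det u' := by
    rw [hU, _root_.map_mul, hdetD, hc]
    exact inv_mul_cancel_right _ _
  set q0 : GL22 F := ⟨(U, u'), hdetU⟩ with hq0
  refine ⟨q0 * ⟨(g, h), hdet⟩ * q0⁻¹, ?_, ?_, ?_⟩
  · show IsStdForm (U * g * U⁻¹)
    have hUg : U * g * U⁻¹ = Dunit F c * (u * g * u⁻¹) * (Dunit F c)⁻¹ := by
      rw [hU]; group
    rw [hUg]
    exact isStdForm_diag_conj F c _ hu
  · show IsStdForm (u' * h * u'⁻¹)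
    exact hu'
  · rw [isConj_iff]
    exact ⟨QuotientGroup.mk q0, rfl⟩
end

section
/- Let x, y ∈ F with x ∉ {0, 1, −1} and y ∉ {0, 1, −1}. The classes [(I₂, diag(x, x⁻¹))] and [(I₂, diag(y, y⁻¹))] are conjugate in SO₄(F) if and only if y = x or y = x⁻¹. -/
set_option linter.unusedSectionVars false

open Matrix

variable (F : Type*) [Field F] [Fintype F] [DecidableEq F]

/-- For `x, y ∉ {0,1,-1}`, the classes `[(I₂, diag(x,x⁻¹))]` and `[(I₂, diag(y,y⁻¹))]` are
conjugate in `SO₄(F)` iff `y = x` or `y = x⁻¹`. -/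
theorem conj_c1c3_iff (hq : Odd (Fintype.card F)) (x y : F)
    (hx0 : x ≠ 0) (hx1 : x ≠ 1) (hx2 : x ≠ -1)
    (hy0 : y ≠ 0) (hy1 : y ≠ 1) (hy2 : y ≠ -1)
    (p q : GL22 F)
    (hp1 : (p.val.1 : Matrix (Fin 2) (Fin 2) F) = 1)
    (hp2 : (p.val.2 : Matrix (Fin 2) (Fin 2) F) = Matrix.diagonal ![x, x⁻¹])
    (hq1 : (q.val.1 : Matrix (Fin 2) (Fin 2) F) = 1)
    (hq2 : (q.val.2 : Matrix (Fin 2) (Fin 2) F) = Matrix.diagonal ![y, y⁻¹]) :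
    IsConj (cls F p) (cls F q) ↔ (y = x ∨ y = x⁻¹) := by

  constructor
  · intro h
    obtain ⟨u, hu⟩ := isConj_iff.mp h
    obtain ⟨c, rfl⟩ := QuotientGroup.mk_surjective u
    have hu : (QuotientGroup.mk c : SO4 F) * cls F p = cls F q * QuotientGroup.mk c :=
      mul_inv_eq_iff_eq_mul.mp hu
    have hP1 : p.val.1 = 1 := Units.ext (by simpa using hp1)
    have hQ1 : q.val.1 = 1 := Units.ext (by simpa using hq1)
    have hmk : (QuotientGroup.mk (c * p) : SO4 F) = QuotientGroup.mk (q * c) := by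
      simpa [cls] using hu
    obtain ⟨a, ha⟩ := (QuotientGroup.eq).mp hmk
    have ha1 : sc F a = ((c * p)⁻¹ * (q * c)).val.1 := congrArg (fun z => z.val.1) ha
    have hsc : sc F a = 1 := by
      rw [ha1]
      show ((c.val.1 * p.val.1)⁻¹ * (q.val.1 * c.val.1)) = 1
      rw [hP1, hQ1, mul_one, one_mul, inv_mul_cancel]
    have hav : (a : F) = 1 := by
      have := congrArg (fun u : GL (Fin 2) F => (u : Matrix (Fin 2) (Fin 2) F) 0 0) hsc
      simpa [sc, Matrix.scalar, Matrix.one_apply] using this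
    have haa : a = 1 := Units.ext hav
    rw [haa, _root_.map_one] at ha
    have hcp : c * p = q * c := inv_mul_eq_one.mp ha.symm
    have h2 : c.val.2 * p.val.2 = q.val.2 * c.val.2 := congrArg (fun z => z.val.2) hcp
    have h3 : p.val.2 = (c.val.2)⁻¹ * (q.val.2 * c.val.2) := by
      rw [← h2, inv_mul_cancel_left]
    have h4 : (Matrix.diagonal ![x, x⁻¹]) =
        (↑(c.val.2)⁻¹ : Matrix (Fin 2) (Fin 2) F) *
          ((Matrix.diagonal ![y, y⁻¹]) * (↑(c.val.2) : Matrix (Fin 2) (Fin 2) F)) := by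
      rw [← hp2, ← hq2, h3, Units.val_mul, Units.val_mul]
    have htr : x + x⁻¹ = y + y⁻¹ := by
      have := congrArg Matrix.trace h4
      rw [Matrix.trace_mul_comm, mul_assoc, Units.mul_inv, mul_one] at this
      simpa [Matrix.trace_diagonal, Fin.sum_univ_two] using this
    have h1x : x * x⁻¹ = 1 := mul_inv_cancel₀ hx0
    have h1y : y * y⁻¹ = 1 := mul_inv_cancel₀ hy0
    have key : (y - x) * (y - x⁻¹) = 0 := by
      linear_combination (-y) * htr + h1x - h1y
    rcases mul_eq_zero.mp key with h | h
    · exact Or.inl (sub_eq_zero.mp h)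
    · exact Or.inr (sub_eq_zero.mp h)
  · intro h
    rcases h with rfl | rfl
    · have hpq : p = q := Subtype.ext (Prod.ext
        (Units.ext (hp1.trans hq1.symm)) (Units.ext (hp2.trans hq2.symm)))
      rw [hpq]
    · -- y = x⁻¹
      have hG : !![(1:F),0;0,-1] * !![(1:F),0;0,-1] = 1 := by
        rw [Matrix.mul_fin_two, Matrix.one_fin_two]; norm_num
      have hH : !![(0:F),1;1,0] * !![(0:F),1;1,0] = 1 := by
        rw [Matrix.mul_fin_two, Matrix.one_fin_two]; norm_num
      set G : GL (Fin 2) F := ⟨!![(1:F),0;0,-1], !![(1:F),0;0,-1], hG, hG⟩ with hGdef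
      set H : GL (Fin 2) F := ⟨!![(0:F),1;1,0], !![(0:F),1;1,0], hH, hH⟩ with hHdef
      have hdet : Matrix.GeneralLinearGroup.det G = Matrix.GeneralLinearGroup.det H := by
        apply Units.ext
        rw [Matrix.GeneralLinearGroup.val_det_apply, Matrix.GeneralLinearGroup.val_det_apply]
        show Matrix.det !![(1:F),0;0,-1] = Matrix.det !![(0:F),1;1,0]
        rw [Matrix.det_fin_two_of, Matrix.det_fin_two_of]; ring
      set c : GL22 F := ⟨(G, H), hdet⟩ with hcdef
      have hcp : c * p = q * c := by
        apply Subtype.ext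
        apply Prod.ext
        · apply Units.ext
          show ((G * p.val.1 : GL (Fin 2) F) : Matrix (Fin 2) (Fin 2) F) = ↑(q.val.1 * G)
          rw [Units.val_mul, Units.val_mul, hp1, hq1, mul_one, one_mul]
        · apply Units.ext
          show ((H * p.val.2 : GL (Fin 2) F) : Matrix (Fin 2) (Fin 2) F) = ↑(q.val.2 * H)
          rw [Units.val_mul, Units.val_mul, hp2, hq2, inv_inv]
          show !![(0:F),1;1,0] * Matrix.diagonal ![x, x⁻¹]
            = Matrix.diagonal ![x⁻¹, x] * !![(0:F),1;1,0]
          ext i j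
          fin_cases i <;> fin_cases j <;>
            simp [Matrix.mul_apply, Fin.sum_univ_two, Matrix.diagonal]
      refine isConj_iff.mpr ⟨cls F c, mul_inv_eq_iff_eq_mul.mpr ?_⟩
      have : (QuotientGroup.mk (c * p) : SO4 F) = QuotientGroup.mk (q * c) :=
        congrArg _ hcp
      simpa [cls, QuotientGroup.mk_mul] using this
end

section
/- The number of conjugacy classes of SO₄(F) that contain an element of the form [(I₂, diag(x, x⁻¹))] with x ∈ F \ {0, 1, −1} is exactly (q−3)/2. -/
set_option linter.unusedSectionVars false
set_option maxHeartbeats 1000000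

open Matrix

variable (F : Type*) [Field F] [Fintype F] [DecidableEq F]

-- auxiliary defs
lemma Dmul (x : Fˣ) : Matrix.diagonal ![(x:F), (x:F)⁻¹] * Matrix.diagonal ![(x:F)⁻¹, (x:F)] = 1 := by
  rw [Matrix.diagonal_mul_diagonal]
  ext i j
  fin_cases i <;> fin_cases j <;>
    simp [Matrix.diagonal_apply, Matrix.one_apply, x.ne_zero]

lemma Dmul' (x : Fˣ) : Matrix.diagonal ![(x:F)⁻¹, (x:F)] * Matrix.diagonal ![(x:F), (x:F)⁻¹] = 1 := by
  rw [Matrix.diagonal_mul_diagonal]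
  ext i j
  fin_cases i <;> fin_cases j <;>
    simp [Matrix.diagonal_apply, Matrix.one_apply, x.ne_zero]

noncomputable def Du (x : Fˣ) : GL (Fin 2) F :=
  ⟨Matrix.diagonal ![(x:F), (x:F)⁻¹], Matrix.diagonal ![(x:F)⁻¹, (x:F)], Dmul F x, Dmul' F x⟩

lemma pairU_mem (x : Fˣ) : ((1 : GL (Fin 2) F), Du F x) ∈ GL22 F := by
  show Matrix.GeneralLinearGroup.det _ = Matrix.GeneralLinearGroup.det _
  apply Units.ext
  rw [Matrix.GeneralLinearGroup.val_det_apply, Matrix.GeneralLinearGroup.val_det_apply]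
  show Matrix.det (1 : Matrix (Fin 2) (Fin 2) F) = Matrix.det (Matrix.diagonal ![(x:F), (x:F)⁻¹])
  rw [Matrix.det_one, Matrix.det_diagonal]
  simp [Fin.prod_univ_two, x.ne_zero]

noncomputable def pairU (x : Fˣ) : GL22 F := ⟨(1, Du F x), pairU_mem F x⟩

noncomputable def Phi (x : Fˣ) : ConjClasses (SO4 F) := ConjClasses.mk (cls F (pairU F x))

lemma Wmul : (!![0,1;1,0] : Matrix (Fin 2) (Fin 2) F) * !![0,1;1,0] = 1 := by
  ext i j; fin_cases i <;> fin_cases j <;> simp [Matrix.mul_apply, Fin.sum_univ_two, Matrix.one_apply]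

noncomputable def W : GL (Fin 2) F := ⟨!![0,1;1,0], !![0,1;1,0], Wmul F, Wmul F⟩

lemma Wp_mem : ((W F), (W F)) ∈ GL22 F := rfl

noncomputable def Wp : GL22 F := ⟨(W F, W F), Wp_mem F⟩

lemma conj_W (x : Fˣ) : Wp F * pairU F x * (Wp F)⁻¹ = pairU F x⁻¹ := by
  apply Subtype.ext
  rw [Subgroup.coe_mul, Subgroup.coe_mul, Subgroup.coe_inv]
  apply Prod.ext <;> apply Units.ext
  · show (W F : Matrix (Fin 2) (Fin 2) F) * 1 * ((W F)⁻¹ : GL (Fin 2) F) = 1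
    simp only [W, Units.inv_mk, Units.val_mk, mul_one]
    exact Wmul F
  · show (W F : Matrix (Fin 2) (Fin 2) F) * (Du F x : Matrix (Fin 2) (Fin 2) F) * ((W F)⁻¹ : GL (Fin 2) F) = (Du F x⁻¹ : Matrix (Fin 2) (Fin 2) F)
    simp only [W, Du, Units.inv_mk, Units.val_mk, Units.val_inv_eq_inv_val, inv_inv]
    ext i j
    fin_cases i <;> fin_cases j <;>
      simp [Matrix.mul_apply, Fin.sum_univ_two, Matrix.diagonal_apply, vecHead, vecTail, Matrix.vecMul, dotProduct]

lemma phi_inv (x : Fˣ) : Phi F x⁻¹ = Phi F x := by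
  unfold Phi cls
  rw [ConjClasses.mk_eq_mk_iff_isConj]
  apply isConj_iff.2
  refine ⟨QuotientGroup.mk (Wp F), ?_⟩
  rw [← QuotientGroup.mk_inv, ← QuotientGroup.mk_mul, ← QuotientGroup.mk_mul, conj_W, inv_inv]

lemma phi_inj (x y : Fˣ) (h : Phi F x = Phi F y) : y = x ∨ y = x⁻¹ := by
  unfold Phi cls at h
  rw [ConjClasses.mk_eq_mk_iff_isConj] at h
  obtain ⟨c, hc⟩ := isConj_iff.1 h
  obtain ⟨g, rfl⟩ := QuotientGroup.mk_surjective c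
  have hc' : (QuotientGroup.mk (g * pairU F x * g⁻¹) : SO4 F) = QuotientGroup.mk (pairU F y) := by
    rw [← hc]
    rw [QuotientGroup.mk_mul, QuotientGroup.mk_mul, QuotientGroup.mk_inv]
  rw [QuotientGroup.eq] at hc'
  obtain ⟨a, ha⟩ := hc'
  -- first component forces a = 1
  have ha1 : (sc F a : Matrix (Fin 2) (Fin 2) F) =
      ((((g * pairU F x * g⁻¹)⁻¹ * pairU F y : GL22 F) : GL (Fin 2) F × GL (Fin 2) F).1 : Matrix (Fin 2) (Fin 2) F) := by
    rw [← ha]; rfl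
  have hfst : ((((g * pairU F x * g⁻¹)⁻¹ * pairU F y : GL22 F) : GL (Fin 2) F × GL (Fin 2) F).1 : Matrix (Fin 2) (Fin 2) F) = 1 := by
    have e1 : (((pairU F y : GL (Fin 2) F × GL (Fin 2) F)).1 : GL (Fin 2) F) = 1 := rfl
    have e2 : (((pairU F x : GL (Fin 2) F × GL (Fin 2) F)).1 : GL (Fin 2) F) = 1 := rfl
    rw [Subgroup.coe_mul, Subgroup.coe_inv, Subgroup.coe_mul, Subgroup.coe_mul]
    simp [e1, e2]
  have haval : (a : F) = 1 := by
    have := ha1.trans hfst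
    have h00 := congrFun (congrFun this 0) 0
    simpa [sc, Matrix.scalar, Matrix.one_apply] using h00
  have ha_one : a = 1 := Units.ext haval
  rw [ha_one, _root_.map_one] at ha
  have haeq : g * pairU F x * g⁻¹ = pairU F y := inv_mul_eq_one.1 ha.symm
  -- second components
  have hsnd : ((g : GL (Fin 2) F × GL (Fin 2) F).2) * Du F x * ((g : GL (Fin 2) F × GL (Fin 2) F).2)⁻¹ = Du F y := by
    have := congrArg (fun z : GL22 F => ((z : GL (Fin 2) F × GL (Fin 2) F)).2) haeq
    simpa [pairU] using this
  have htr : Matrix.trace (Du F x : Matrix (Fin 2) (Fin 2) F) = Matrix.trace (Du F y : Matrix (Fin 2) (Fin 2) F) := by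
    have := congrArg (fun z : GL (Fin 2) F => Matrix.trace (z : Matrix (Fin 2) (Fin 2) F)) hsnd
    simp only [Units.val_mul] at this
    rw [Matrix.trace_units_conj] at this
    exact this
  have htr' : (x:F) + (x:F)⁻¹ = (y:F) + (y:F)⁻¹ := by
    simpa [Du, Matrix.trace_diagonal, Fin.sum_univ_two] using htr
  have key : ((y:F) - (x:F)) * ((y:F) - (x:F)⁻¹) = 0 := by
    have hx0 : (x:F) ≠ 0 := x.ne_zero
    have hy0 : (y:F) ≠ 0 := y.ne_zero
    have expand : ((y:F) - (x:F)) * ((y:F) - (x:F)⁻¹) =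
        (y:F) * (((y:F) + (y:F)⁻¹) - ((x:F) + (x:F)⁻¹)) := by
      field_simp
      ring
    rw [expand, ← htr', sub_self, mul_zero]
  rcases mul_eq_zero.1 key with hk | hk
  · left; apply Units.ext; have := sub_eq_zero.1 hk; exact this
  · right; apply Units.ext
    have := sub_eq_zero.1 hk
    rw [this]; simp

lemma neg_one_ne_one' (hq : Odd (Fintype.card F)) : (-1 : F) ≠ 1 := by
  intro h
  have h2 : (2 : F) = 0 := by linear_combination -h
  have hd : ringChar F ∣ 2 := by
    have : ((2:ℕ) : F) = 0 := by exact_mod_cast h2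
    exact ringChar.dvd this
  have hp : (ringChar F).Prime := CharP.char_is_prime F (ringChar F)
  have hr2 : ringChar F = 2 := (Nat.prime_dvd_prime_iff_eq hp Nat.prime_two).1 hd
  have he := FiniteField.even_card_of_char_two hr2
  obtain ⟨k, hk⟩ := hq
  omega


/-- The number of conjugacy classes of `SO₄(F)` containing an element of the form
`[(I₂, diag(x,x⁻¹))]` with `x ∉ {0,1,-1}` is exactly `(q-3)/2`. -/
theorem card_c1c3_classes (hq : Odd (Fintype.card F)) :
    Nat.card {c : ConjClasses (SO4 F) // ∃ p : GL22 F, ∃ x : F,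
        x ≠ 0 ∧ x ≠ 1 ∧ x ≠ -1 ∧
        (p.val.1 : Matrix (Fin 2) (Fin 2) F) = 1 ∧
        (p.val.2 : Matrix (Fin 2) (Fin 2) F) = Matrix.diagonal ![x, x⁻¹] ∧
        c = ConjClasses.mk (cls F p)} = (Fintype.card F - 3) / 2 := by
  classical
  have hm1 : (-1 : F) ≠ 1 := neg_one_ne_one' F hq
  set T : Finset Fˣ := Finset.univ.filter (fun x => x ≠ 1 ∧ x ≠ -1) with hT
  have hiff : ∀ c : ConjClasses (SO4 F), (∃ p : GL22 F, ∃ x : F,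
        x ≠ 0 ∧ x ≠ 1 ∧ x ≠ -1 ∧
        (p.val.1 : Matrix (Fin 2) (Fin 2) F) = 1 ∧
        (p.val.2 : Matrix (Fin 2) (Fin 2) F) = Matrix.diagonal ![x, x⁻¹] ∧
        c = ConjClasses.mk (cls F p)) ↔ c ∈ T.image (Phi F) := by
    intro c
    constructor
    · rintro ⟨p, x, hx0, hx1, hxm1, hp1, hp2, rfl⟩
      refine Finset.mem_image.2 ⟨Units.mk0 x hx0, ?_, ?_⟩
      · simp only [hT, Finset.mem_filter, Finset.mem_univ, true_and]
        constructor
        · intro h; exact hx1 (by simpa [Units.ext_iff] using h)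
        · intro h; exact hxm1 (by simpa [Units.ext_iff] using h)
      · have hpe : p = pairU F (Units.mk0 x hx0) := by
          apply Subtype.ext; apply Prod.ext <;> apply Units.ext
          · exact hp1
          · exact hp2
        rw [hpe]; rfl
    · rintro h
      obtain ⟨u, hu, rfl⟩ := Finset.mem_image.1 h
      simp only [hT, Finset.mem_filter, Finset.mem_univ, true_and] at hu
      refine ⟨pairU F u, (u:F), u.ne_zero, ?_, ?_, rfl, rfl, rfl⟩
      · intro h1; exact hu.1 (Units.ext (by simpa using h1))
      · intro h1; exact hu.2 (Units.ext (by simpa using h1))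
  have hcard1 : Nat.card {c : ConjClasses (SO4 F) // ∃ p : GL22 F, ∃ x : F,
        x ≠ 0 ∧ x ≠ 1 ∧ x ≠ -1 ∧
        (p.val.1 : Matrix (Fin 2) (Fin 2) F) = 1 ∧
        (p.val.2 : Matrix (Fin 2) (Fin 2) F) = Matrix.diagonal ![x, x⁻¹] ∧
        c = ConjClasses.mk (cls F p)} = (T.image (Phi F)).card := by
    rw [Nat.card_congr (Equiv.subtypeEquivRight hiff)]
    exact Nat.card_eq_finsetCard _
  have hfiber : ∀ b ∈ T.image (Phi F), (T.filter fun x => Phi F x = b).card = 2 := by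
    intro b hb
    obtain ⟨x₀, hx₀, rfl⟩ := Finset.mem_image.1 hb
    simp only [hT, Finset.mem_filter, Finset.mem_univ, true_and] at hx₀
    have hinv1 : x₀⁻¹ ≠ 1 := fun h => hx₀.1 (by rwa [inv_eq_one] at h)
    have hinvm1 : x₀⁻¹ ≠ -1 := by
      intro h
      apply hx₀.2
      have : x₀ = (-1 : Fˣ)⁻¹ := by rw [← h, inv_inv]
      simpa using this
    have hne : x₀ ≠ x₀⁻¹ := by
      intro h
      have hsq : (x₀ : F) * (x₀ : F) = 1 := by
        have := congrArg (fun z : Fˣ => (x₀ : F) * (z : F)) h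
        simpa [x₀.ne_zero] using this
      have : ((x₀:F) - 1) * ((x₀:F) + 1) = 0 := by ring_nf; linear_combination hsq
      rcases mul_eq_zero.1 this with h1 | h1
      · exact hx₀.1 (Units.ext (by simpa [sub_eq_zero] using h1))
      · apply hx₀.2
        apply Units.ext
        have : (x₀ : F) = -1 := by linear_combination h1
        simpa using this
    have hfe : T.filter (fun x => Phi F x = Phi F x₀) = {x₀, x₀⁻¹} := by
      ext z
      simp only [Finset.mem_filter, hT, Finset.mem_univ, true_and, Finset.mem_insert,
        Finset.mem_singleton]
      constructor
      · rintro ⟨_, hphi⟩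
        exact phi_inj F x₀ z hphi.symm
      · rintro (rfl | rfl)
        · exact ⟨⟨hx₀.1, hx₀.2⟩, rfl⟩
        · exact ⟨⟨hinv1, hinvm1⟩, phi_inv F x₀⟩
    rw [hfe, Finset.card_insert_of_notMem (by simpa using hne), Finset.card_singleton]
  have hsum : T.card = 2 * (T.image (Phi F)).card := by
    rw [Finset.card_eq_sum_card_image (Phi F) T, Finset.sum_congr rfl hfiber,
      Finset.sum_const, smul_eq_mul, mul_comm]
  have hTcard : T.card = Fintype.card F - 3 := by
    have hTeq : T = Finset.univ \ {1, -1} := by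
      ext z
      simp [hT]
    have h2 : ({1, -1} : Finset Fˣ).card = 2 := by
      rw [Finset.card_insert_of_notMem, Finset.card_singleton]
      simp only [Finset.mem_singleton]
      intro h
      exact hm1 (by simpa [Units.ext_iff] using h.symm)
    rw [hTeq, Finset.card_sdiff_of_subset (Finset.subset_univ _), h2, Finset.card_univ,
      Fintype.card_units]
    omega
  rw [hcard1]
  omega
end

section
/- The number of conjugacy classes of SO₄(F) that contain an element of the form [(diag(x₁, x₁⁻¹), diag(x₂, x₂⁻¹))], with x₁, x₂ ∈ F \ {0, 1, −1} and not both x₁² = −1 and x₂² = −1, equals ((q−3)² − 4)/8 if q ≡ 1 (mod 4), and equals (q−3)²/8 if q ≡ 3 (mod 4). -/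
set_option linter.unusedSectionVars false

open Matrix

variable (F : Type*) [Field F] [Fintype F] [DecidableEq F]

/-- The property that a conjugacy class of `SO₄(F)` contains an element of the form
`[(diag(x₁,x₁⁻¹), diag(x₂,x₂⁻¹))]` with `x₁, x₂ ∉ {0,1,-1}` and not both `x₁² = -1` and
`x₂² = -1`. -/
def IsC3C3Class {F : Type*} [Field F] [Fintype F] [DecidableEq F]
    (c : ConjClasses (SO4 F)) : Prop :=
  ∃ p : GL22 F, ∃ x₁ x₂ : F,
    (x₁ ≠ 0 ∧ x₁ ≠ 1 ∧ x₁ ≠ -1) ∧ (x₂ ≠ 0 ∧ x₂ ≠ 1 ∧ x₂ ≠ -1) ∧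
    ¬(x₁ ^ 2 = -1 ∧ x₂ ^ 2 = -1) ∧
    (p.val.1 : Matrix (Fin 2) (Fin 2) F) = Matrix.diagonal ![x₁, x₁⁻¹] ∧
    (p.val.2 : Matrix (Fin 2) (Fin 2) F) = Matrix.diagonal ![x₂, x₂⁻¹] ∧
    c = ConjClasses.mk (cls F p)

namespace C3C3

variable {F}

lemma diag_fin_two (a b : F) : Matrix.diagonal ![a, b] = !![a, 0; 0, b] := by
  ext i j
  fin_cases i <;> fin_cases j <;> simp [Matrix.diagonal]

/-- `diag(x, x⁻¹)` as an element of `GL₂`. -/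
noncomputable def Dg (x : Fˣ) : GL (Fin 2) F where
  val := Matrix.diagonal ![(x : F), ((x⁻¹ : Fˣ) : F)]
  inv := Matrix.diagonal ![((x⁻¹ : Fˣ) : F), (x : F)]
  val_inv := by
    rw [Matrix.diagonal_mul_diagonal]
    have : (fun i => ![(x : F), ((x⁻¹ : Fˣ) : F)] i * ![((x⁻¹ : Fˣ) : F), (x : F)] i) = fun _ => (1:F) := by
      funext i; fin_cases i <;> simp
    rw [this]; exact Matrix.diagonal_one
  inv_val := by
    rw [Matrix.diagonal_mul_diagonal]
    have : (fun i => ![((x⁻¹ : Fˣ) : F), (x : F)] i * ![(x : F), ((x⁻¹ : Fˣ) : F)] i) = fun _ => (1:F) := by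
      funext i; fin_cases i <;> simp
    rw [this]; exact Matrix.diagonal_one

@[simp] lemma Dg_val (x : Fˣ) :
    (Dg x : Matrix (Fin 2) (Fin 2) F) = Matrix.diagonal ![(x : F), (x : F)⁻¹] := by
  simp [Dg]

@[simp] lemma Dg_inv_val (x : Fˣ) :
    ((Dg x)⁻¹ : GL (Fin 2) F) = (Matrix.diagonal ![(x : F)⁻¹, (x : F)] : Matrix (Fin 2) (Fin 2) F) := by
  show (Dg x).inv = _
  simp [Dg]

lemma det_Dg (x : Fˣ) : Matrix.GeneralLinearGroup.det (Dg x) = 1 := by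
  apply Units.ext
  show Matrix.det _ = 1
  rw [Dg_val, Matrix.det_diagonal, Fin.prod_univ_two]
  simp [mul_inv_cancel₀ x.ne_zero]

/-- The pair `(diag(x,x⁻¹), diag(y,y⁻¹))` as an element of `GL22`. -/
noncomputable def Pg (x y : Fˣ) : GL22 F :=
  ⟨(Dg x, Dg y), by
    show Matrix.GeneralLinearGroup.det _ = Matrix.GeneralLinearGroup.det _
    rw [det_Dg, det_Dg]⟩

/-- The swap matrix as an element of `GL₂`. -/
def Wg : GL (Fin 2) F where
  val := !![0, 1; 1, 0]
  inv := !![0, 1; 1, 0]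
  val_inv := by
    rw [Matrix.mul_fin_two, Matrix.one_fin_two]
    norm_num
  inv_val := by
    rw [Matrix.mul_fin_two, Matrix.one_fin_two]
    norm_num

/-- `diag(-1,1)` as an element of `GL₂`. -/
def Jg : GL (Fin 2) F where
  val := !![-1, 0; 0, 1]
  inv := !![-1, 0; 0, 1]
  val_inv := by
    rw [Matrix.mul_fin_two, Matrix.one_fin_two]
    norm_num
  inv_val := by
    rw [Matrix.mul_fin_two, Matrix.one_fin_two]
    norm_num

lemma det_Wg : Matrix.GeneralLinearGroup.det (Wg (F := F)) =
    Matrix.GeneralLinearGroup.det (Jg (F := F)) := by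
  apply Units.ext
  show Matrix.det _ = Matrix.det _
  show Matrix.det !![(0:F),1;1,0] = Matrix.det !![(-1:F),0;0,1]
  rw [Matrix.det_fin_two_of, Matrix.det_fin_two_of]
  ring

/-- `(W, J)` as an element of `GL22`. -/
def WJ : GL22 F := ⟨(Wg, Jg), det_Wg⟩

/-- `(J, W)` as an element of `GL22`. -/
def JW : GL22 F := ⟨(Jg, Wg), det_Wg.symm⟩

lemma Wg_val : (Wg (F := F)).val = !![0, 1; 1, 0] := rfl
lemma Wg_inv_val : ((Wg (F := F))⁻¹).val = !![0, 1; 1, 0] := rfl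
lemma Jg_val : (Jg (F := F)).val = !![-1, 0; 0, 1] := rfl
lemma Jg_inv_val : ((Jg (F := F))⁻¹).val = !![-1, 0; 0, 1] := rfl

lemma conj_Dg_W (x : Fˣ) : Wg * Dg x * Wg⁻¹ = Dg x⁻¹ := by
  apply Units.ext
  rw [Units.val_mul, Units.val_mul, Wg_val, Wg_inv_val, Dg_val, Dg_val,
    diag_fin_two, diag_fin_two, Matrix.mul_fin_two, Matrix.mul_fin_two]
  simp

lemma conj_Dg_J (x : Fˣ) : Jg * Dg x * Jg⁻¹ = Dg x := by
  apply Units.ext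
  rw [Units.val_mul, Units.val_mul, Jg_val, Jg_inv_val, Dg_val,
    diag_fin_two, Matrix.mul_fin_two, Matrix.mul_fin_two]
  norm_num

variable (F) in
/-- The conjugacy class of `[(diag(x,x⁻¹), diag(y,y⁻¹))]`. -/
noncomputable def phi' (x y : Fˣ) : ConjClasses (SO4 F) :=
  ConjClasses.mk (cls F (Pg x y))

lemma conj_Pg_WJ (x y : Fˣ) : WJ * Pg x y * WJ⁻¹ = Pg x⁻¹ y := by
  apply Subtype.ext
  apply Prod.ext
  · exact conj_Dg_W x
  · exact conj_Dg_J y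

lemma conj_Pg_JW (x y : Fˣ) : JW * Pg x y * JW⁻¹ = Pg x y⁻¹ := by
  apply Subtype.ext
  apply Prod.ext
  · exact conj_Dg_J x
  · exact conj_Dg_W y

lemma Dg_neg (x : Fˣ) : ((Dg (-x) : GL (Fin 2) F) : Matrix (Fin 2) (Fin 2) F) =
    Matrix.scalar (Fin 2) (((-1 : Fˣ) : F)) * ((Dg x : GL (Fin 2) F) : Matrix (Fin 2) (Fin 2) F) := by
  rw [Dg_val, Dg_val]
  simp only [Units.val_neg, Units.val_one, Matrix.scalar_apply]
  rw [Matrix.diagonal_mul_diagonal]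
  ext i j
  fin_cases i <;> fin_cases j <;> simp [inv_neg, Matrix.diagonal]

lemma Pg_neg (x y : Fˣ) : Pg (-x) (-y) = scalarHom F (-1) * Pg x y := by
  apply Subtype.ext
  apply Prod.ext
  · exact Units.ext (Dg_neg x)
  · exact Units.ext (Dg_neg y)

lemma cls_conj (g p : GL22 F) : cls F g * cls F p * (cls F g)⁻¹ = cls F (g * p * g⁻¹) := by
  show QuotientGroup.mk _ * QuotientGroup.mk _ * (QuotientGroup.mk _)⁻¹ = QuotientGroup.mk _
  rw [← QuotientGroup.mk_inv, ← QuotientGroup.mk_mul, ← QuotientGroup.mk_mul]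

lemma phi'_inv_left (x y : Fˣ) : phi' F x⁻¹ y = phi' F x y := by
  symm
  exact ConjClasses.mk_eq_mk_iff_isConj.mpr
    (isConj_iff.mpr ⟨cls F WJ, by rw [cls_conj, conj_Pg_WJ]⟩)

lemma phi'_inv_right (x y : Fˣ) : phi' F x y⁻¹ = phi' F x y := by
  symm
  exact ConjClasses.mk_eq_mk_iff_isConj.mpr
    (isConj_iff.mpr ⟨cls F JW, by rw [cls_conj, conj_Pg_JW]⟩)

lemma phi'_neg (x y : Fˣ) : phi' F (-x) (-y) = phi' F x y := by
  unfold phi'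
  congr 1
  show QuotientGroup.mk _ = QuotientGroup.mk _
  rw [Pg_neg, QuotientGroup.mk_mul]
  have h1 : (QuotientGroup.mk (scalarHom F (-1)) : SO4 F) = 1 :=
    (QuotientGroup.eq_one_iff _).mpr ⟨-1, rfl⟩
  rw [h1, one_mul]

lemma quad {a x y : F} (hx : x ≠ 0) (hy : y ≠ 0) (ha : a * a = 1)
    (h : y + y⁻¹ = a * (x + x⁻¹)) : y = a * x ∨ y = a * x⁻¹ := by
  have hxu : x * x⁻¹ = 1 := mul_inv_cancel₀ hx
  have hyv : y * y⁻¹ = 1 := mul_inv_cancel₀ hy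
  have key : (y - a * x) * (y - a * x⁻¹) = 0 := by
    linear_combination y * h + (x * x⁻¹) * ha + hxu - hyv
  rcases mul_eq_zero.mp key with h' | h'
  · exact Or.inl (sub_eq_zero.mp h')
  · exact Or.inr (sub_eq_zero.mp h')

lemma sc_val (a : Fˣ) : ((sc F a : GL (Fin 2) F) : Matrix (Fin 2) (Fin 2) F) =
    Matrix.scalar (Fin 2) (a : F) := rfl

lemma mul_scalar (M : Matrix (Fin 2) (Fin 2) F) (a : F) :
    M * Matrix.scalar (Fin 2) a = a • M := by
  ext i j
  simp [Matrix.mul_apply, Matrix.diagonal, Fin.sum_univ_two, Matrix.scalar_apply, mul_comm]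

lemma det_Dg_val (x : Fˣ) : Matrix.det ((Dg x : GL (Fin 2) F) : Matrix (Fin 2) (Fin 2) F) = 1 := by
  rw [Dg_val, Matrix.det_diagonal, Fin.prod_univ_two]
  simp [mul_inv_cancel₀ x.ne_zero]

lemma trace_Dg (x : Fˣ) : Matrix.trace ((Dg x : GL (Fin 2) F) : Matrix (Fin 2) (Fin 2) F) =
    (x : F) + (x : F)⁻¹ := by
  rw [Dg_val, Matrix.trace_diagonal, Fin.sum_univ_two]
  simp

/-- The key component computation: if `Dg y = u * Dg x * u⁻¹ * sc a`, then the trace and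
determinant relations hold. -/
lemma comp_relation {u : GL (Fin 2) F} {a : Fˣ} {x y : Fˣ}
    (h : Dg y = u * Dg x * u⁻¹ * sc F a) :
    (y : F) + (y : F)⁻¹ = (a : F) * ((x : F) + (x : F)⁻¹) ∧ (a : F) * (a : F) = 1 := by
  have hm : ((Dg y : GL (Fin 2) F) : Matrix (Fin 2) (Fin 2) F) =
      (a : F) • ((u : Matrix (Fin 2) (Fin 2) F) * (Dg x : GL (Fin 2) F)
        * ((u⁻¹ : GL (Fin 2) F) : Matrix (Fin 2) (Fin 2) F)) := by
    have := congrArg (fun z : GL (Fin 2) F => (z : Matrix (Fin 2) (Fin 2) F)) h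
    simp only [Units.val_mul, sc_val] at this
    rw [this, mul_scalar]
  constructor
  · have ht := congrArg Matrix.trace hm
    rw [trace_Dg, Matrix.trace_smul, Matrix.trace_units_conj, trace_Dg, smul_eq_mul] at ht
    exact ht
  · have hd := congrArg Matrix.det hm
    rw [det_Dg_val, Matrix.det_smul, Matrix.det_units_conj, det_Dg_val] at hd
    simp only [Fintype.card_fin, mul_one] at hd
    rw [← sq]; exact hd.symm

/-- The hard direction: equal classes force the parameters to be related. -/
lemma phi'_eq_imp {x1 y1 x2 y2 : Fˣ} (h : phi' F x1 y1 = phi' F x2 y2) :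
    ∃ a : F, (a = 1 ∨ a = -1) ∧
      ((x2 : F) = a * x1 ∨ (x2 : F) = a * (x1 : F)⁻¹) ∧
      ((y2 : F) = a * y1 ∨ (y2 : F) = a * (y1 : F)⁻¹) := by
  obtain ⟨c, hc⟩ := isConj_iff.mp (ConjClasses.mk_eq_mk_iff_isConj.mp h)
  obtain ⟨g, rfl⟩ := QuotientGroup.mk_surjective c
  have hc2 : cls F (g * Pg x1 y1 * g⁻¹) = cls F (Pg x2 y2) := by
    rw [← cls_conj]; exact hc
  obtain ⟨a, ha⟩ := QuotientGroup.eq.mp hc2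
  have hP : Pg x2 y2 = g * Pg x1 y1 * g⁻¹ * scalarHom F a := by
    have : (g * Pg x1 y1 * g⁻¹) * ((g * Pg x1 y1 * g⁻¹)⁻¹ * Pg x2 y2)
        = (g * Pg x1 y1 * g⁻¹) * scalarHom F a := by rw [ha]
    rw [mul_inv_cancel_left] at this
    rw [← this]
  have h1 : Dg x2 = (g : GL (Fin 2) F × GL (Fin 2) F).1 * Dg x1
      * ((g : GL (Fin 2) F × GL (Fin 2) F).1)⁻¹ * sc F a :=
    congrArg (fun z => z.val.1) hP
  have h2 : Dg y2 = (g : GL (Fin 2) F × GL (Fin 2) F).2 * Dg y1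
      * ((g : GL (Fin 2) F × GL (Fin 2) F).2)⁻¹ * sc F a :=
    congrArg (fun z => z.val.2) hP
  obtain ⟨ht1, ha2⟩ := comp_relation h1
  obtain ⟨ht2, -⟩ := comp_relation h2
  refine ⟨(a : F), mul_self_eq_one_iff.mp ha2, ?_, ?_⟩
  · exact quad x1.ne_zero x2.ne_zero ha2 ht1
  · exact quad y1.ne_zero y2.ne_zero ha2 ht2

/-- The action of `Bool × Bool × Bool` (sign, invert-first, invert-second) on pairs. -/
def act (b : Bool × Bool × Bool) (p : F × F) : F × F :=
  ((cond b.1 (-1 : F) 1) * (cond b.2.1 p.1⁻¹ p.1),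
   (cond b.1 (-1 : F) 1) * (cond b.2.2 p.2⁻¹ p.2))

lemma key_eq {x : F} (hx0 : x ≠ 0) (hx1 : x ≠ 1) (hxm : x ≠ -1) (hm : (-1 : F) ≠ 1)
    {s s' b b' : Bool}
    (h : (cond s (-1 : F) 1) * (cond b x⁻¹ x) = (cond s' (-1 : F) 1) * (cond b' x⁻¹ x)) :
    (s = s' ∧ b = b') ∨ (s ≠ s' ∧ b ≠ b' ∧ x ^ 2 = -1) := by
  have hinv : x * x⁻¹ = 1 := mul_inv_cancel₀ hx0
  have A : ¬(x = x⁻¹) := by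
    intro hh
    rcases mul_self_eq_one_iff.mp (by linear_combination x * hh + hinv : x * x = 1) with
      h1 | h1
    exacts [hx1 h1, hxm h1]
  have B : ¬(x = -x) := by
    intro hh
    exact hm (mul_left_cancel₀ hx0 (by linear_combination -hh : x * (-1 : F) = x * 1))
  have B' : ¬(x⁻¹ = -x⁻¹) := by
    intro hh
    exact hm (mul_left_cancel₀ (inv_ne_zero hx0)
      (by linear_combination -hh : x⁻¹ * (-1 : F) = x⁻¹ * 1))
  have C : x = -x⁻¹ → x ^ 2 = -1 := fun hh => by linear_combination x * hh - hinv
  have C' : -x = x⁻¹ → x ^ 2 = -1 := fun hh => by linear_combination (-x) * hh - hinv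
  cases s <;> cases s' <;> cases b <;> cases b' <;>
    simp only [Bool.cond_true, Bool.cond_false, one_mul, neg_mul, neg_inj, neg_neg] at h <;>
    first
      | exact Or.inl ⟨rfl, rfl⟩
      | exact absurd h A
      | exact absurd h.symm A
      | exact absurd h B
      | exact absurd h.symm B
      | exact absurd h B'
      | exact absurd h.symm B'
      | exact Or.inr ⟨by simp, by simp, C h⟩
      | exact Or.inr ⟨by simp, by simp, C h.symm⟩
      | exact Or.inr ⟨by simp, by simp, C' h⟩
      | exact Or.inr ⟨by simp, by simp, C' h.symm⟩
      | exact Or.inr ⟨by simp, by simp, C' (neg_eq_iff_eq_neg.mpr h).symm⟩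
      | exact Or.inr ⟨by simp, by simp, C (neg_eq_iff_eq_neg.mp h.symm)⟩

/-- The predicate cutting out the parameter set. -/
def Tpred (p : F × F) : Prop :=
  (p.1 ≠ 0 ∧ p.1 ≠ 1 ∧ p.1 ≠ -1) ∧ (p.2 ≠ 0 ∧ p.2 ≠ 1 ∧ p.2 ≠ -1) ∧
    ¬(p.1 ^ 2 = -1 ∧ p.2 ^ 2 = -1)

lemma coord_closure {x : F} (h : x ≠ 0 ∧ x ≠ 1 ∧ x ≠ -1) (s b : Bool) :
    let z := (cond s (-1 : F) 1) * (cond b x⁻¹ x)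
    z ≠ 0 ∧ z ≠ 1 ∧ z ≠ -1 := by
  obtain ⟨h0, h1, hmn⟩ := h
  have hi0 : x⁻¹ ≠ 0 := inv_ne_zero h0
  have hi1 : x⁻¹ ≠ 1 := fun hh => h1 (by rw [← inv_inv x, hh, inv_one])
  have him : x⁻¹ ≠ -1 := fun hh => hmn (by rw [← inv_inv x, hh]; norm_num)
  cases s <;> cases b <;>
    simp only [Bool.cond_true, Bool.cond_false, one_mul, neg_mul] <;>
    refine ⟨?_, ?_, ?_⟩ <;>
    first
      | assumption
      | simpa using hi0
      | simpa using h0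
      | (intro hh
         rw [neg_eq_iff_eq_neg] at hh
         first
           | exact hmn hh
           | exact him hh
           | (simp only [neg_neg] at hh
              first
                | exact h1 hh
                | exact hi1 hh))

lemma coord_sq {x : F} (h0 : x ≠ 0) (s b : Bool) :
    ((cond s (-1 : F) 1) * (cond b x⁻¹ x)) ^ 2 = -1 ↔ x ^ 2 = -1 := by
  have : (x⁻¹) ^ 2 = -1 ↔ x ^ 2 = -1 := by
    rw [inv_pow, inv_eq_iff_eq_inv]
    norm_num
  cases s <;> cases b <;>
    simp only [Bool.cond_true, Bool.cond_false, one_mul, neg_mul, neg_sq] <;>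
    first | exact this | exact Iff.rfl

lemma Tpred_act {p : F × F} (hp : Tpred p) (b : Bool × Bool × Bool) : Tpred (act b p) := by
  obtain ⟨h1, h2, hsq⟩ := hp
  refine ⟨coord_closure h1 b.1 b.2.1, coord_closure h2 b.1 b.2.2, ?_⟩
  rw [show (act b p).1 = (cond b.1 (-1 : F) 1) * (cond b.2.1 p.1⁻¹ p.1) from rfl,
    show (act b p).2 = (cond b.1 (-1 : F) 1) * (cond b.2.2 p.2⁻¹ p.2) from rfl,
    coord_sq h1.1, coord_sq h2.1]
  exact hsq

lemma act_injective {p : F × F} (hp : Tpred p) (hm : (-1 : F) ≠ 1) :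
    Function.Injective (fun b : Bool × Bool × Bool => act b p) := by
  rintro ⟨s, b1, b2⟩ ⟨s', b1', b2'⟩ h
  have e1 : (cond s (-1 : F) 1) * (cond b1 p.1⁻¹ p.1)
      = (cond s' (-1 : F) 1) * (cond b1' p.1⁻¹ p.1) := congrArg Prod.fst h
  have e2 : (cond s (-1 : F) 1) * (cond b2 p.2⁻¹ p.2)
      = (cond s' (-1 : F) 1) * (cond b2' p.2⁻¹ p.2) := congrArg Prod.snd h
  rcases key_eq hp.1.1 hp.1.2.1 hp.1.2.2 hm e1 with ⟨hs, hb1⟩ | ⟨hs, _, hsqx⟩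
  · rcases key_eq hp.2.1.1 hp.2.1.2.1 hp.2.1.2.2 hm e2 with ⟨_, hb2⟩ | ⟨hs', _, _⟩
    · rw [hs, hb1, hb2]
    · exact absurd hs hs'
  · rcases key_eq hp.2.1.1 hp.2.1.2.1 hp.2.1.2.2 hm e2 with ⟨hs2, _⟩ | ⟨_, _, hsqy⟩
    · exact absurd hs2 hs
    · exact absurd ⟨hsqx, hsqy⟩ hp.2.2

variable (F) in
open Classical in
/-- Total version of the class map on pairs. -/
noncomputable def phi (p : F × F) : ConjClasses (SO4 F) :=
  if h : p.1 ≠ 0 ∧ p.2 ≠ 0 then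
    phi' F (Units.mk0 p.1 h.1) (Units.mk0 p.2 h.2)
  else 1

lemma phi_eq {p : F × F} (h1 : p.1 ≠ 0) (h2 : p.2 ≠ 0) :
    phi F p = phi' F (Units.mk0 p.1 h1) (Units.mk0 p.2 h2) := dif_pos ⟨h1, h2⟩

lemma phi'_act (x y e : Fˣ) (he : e = 1 ∨ e = -1) (b1 b2 : Bool) :
    phi' F (e * cond b1 x⁻¹ x) (e * cond b2 y⁻¹ y) = phi' F x y := by
  rcases he with rfl | rfl <;> cases b1 <;> cases b2 <;>
    simp only [Bool.cond_true, Bool.cond_false, one_mul] <;>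
    first
      | rfl
      | exact phi'_inv_left x y
      | exact phi'_inv_right x y
      | rw [phi'_inv_left, phi'_inv_right]
      | (rw [show (-1 : Fˣ) * x = -x from by rw [neg_one_mul],
            show (-1 : Fˣ) * y = -y from by rw [neg_one_mul]]
         exact phi'_neg x y)
      | (rw [show (-1 : Fˣ) * x⁻¹ = -x⁻¹ from by rw [neg_one_mul],
            show (-1 : Fˣ) * y = -y from by rw [neg_one_mul]]
         rw [phi'_neg x⁻¹ y]
         exact phi'_inv_left x y)
      | (rw [show (-1 : Fˣ) * x = -x from by rw [neg_one_mul],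
            show (-1 : Fˣ) * y⁻¹ = -y⁻¹ from by rw [neg_one_mul]]
         rw [phi'_neg x y⁻¹]
         exact phi'_inv_right x y)
      | (rw [show (-1 : Fˣ) * x⁻¹ = -x⁻¹ from by rw [neg_one_mul],
            show (-1 : Fˣ) * y⁻¹ = -y⁻¹ from by rw [neg_one_mul]]
         rw [phi'_neg x⁻¹ y⁻¹, phi'_inv_left, phi'_inv_right])

lemma phi_act {p : F × F} (h1 : p.1 ≠ 0) (h2 : p.2 ≠ 0) (b : Bool × Bool × Bool) :
    phi F (act b p) = phi F p := by
  obtain ⟨s, b1, b2⟩ := b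
  have hz : (cond s (-1 : F) 1) ≠ 0 := by cases s <;> simp
  have hc1 : (cond b1 p.1⁻¹ p.1) ≠ 0 := by cases b1 <;> simp [h1, inv_ne_zero]
  have hc2 : (cond b2 p.2⁻¹ p.2) ≠ 0 := by cases b2 <;> simp [h2, inv_ne_zero]
  have ha1 : (act (s, b1, b2) p).1 ≠ 0 := mul_ne_zero hz hc1
  have ha2 : (act (s, b1, b2) p).2 ≠ 0 := mul_ne_zero hz hc2
  rw [phi_eq ha1 ha2, phi_eq h1 h2]
  have hu1 : Units.mk0 (act (s, b1, b2) p).1 ha1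
      = (cond s (-1 : Fˣ) 1) * (cond b1 (Units.mk0 p.1 h1)⁻¹ (Units.mk0 p.1 h1)) := by
    apply Units.ext
    cases s <;> cases b1 <;> simp [act]
  have hu2 : Units.mk0 (act (s, b1, b2) p).2 ha2
      = (cond s (-1 : Fˣ) 1) * (cond b2 (Units.mk0 p.2 h2)⁻¹ (Units.mk0 p.2 h2)) := by
    apply Units.ext
    cases s <;> cases b2 <;> simp [act]
  rw [hu1, hu2]
  exact phi'_act _ _ _ (by cases s <;> simp) b1 b2

lemma phi_fiber {p q : F × F} (hp1 : p.1 ≠ 0) (hp2 : p.2 ≠ 0) (hq1 : q.1 ≠ 0) (hq2 : q.2 ≠ 0)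
    (h : phi F p = phi F q) : ∃ b, q = act b p := by
  rw [phi_eq hp1 hp2, phi_eq hq1 hq2] at h
  obtain ⟨a, ha, hx, hy⟩ := phi'_eq_imp h
  simp only [Units.val_mk0] at hx hy
  rcases ha with rfl | rfl
  · rcases hx with hx | hx <;> rcases hy with hy | hy
    · exact ⟨(false, false, false), Prod.ext (by simpa [act] using hx) (by simpa [act] using hy)⟩
    · exact ⟨(false, false, true), Prod.ext (by simpa [act] using hx) (by simpa [act] using hy)⟩
    · exact ⟨(false, true, false), Prod.ext (by simpa [act] using hx) (by simpa [act] using hy)⟩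
    · exact ⟨(false, true, true), Prod.ext (by simpa [act] using hx) (by simpa [act] using hy)⟩
  · rcases hx with hx | hx <;> rcases hy with hy | hy
    · exact ⟨(true, false, false), Prod.ext (by simpa [act] using hx) (by simpa [act] using hy)⟩
    · exact ⟨(true, false, true), Prod.ext (by simpa [act] using hx) (by simpa [act] using hy)⟩
    · exact ⟨(true, true, false), Prod.ext (by simpa [act] using hx) (by simpa [act] using hy)⟩
    · exact ⟨(true, true, true), Prod.ext (by simpa [act] using hx) (by simpa [act] using hy)⟩

variable (F) in
open Classical in
/-- The parameter set as a finset. -/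
noncomputable def Tset : Finset (F × F) := Finset.univ.filter Tpred

open Classical in
lemma mem_Tset {p : F × F} : p ∈ Tset F ↔ Tpred p := by
  simp [Tset]

lemma isC3C3_iff (c : ConjClasses (SO4 F)) :
    IsC3C3Class c ↔ ∃ p ∈ Tset F, phi F p = c := by
  constructor
  · rintro ⟨p, x1, x2, hx1, hx2, hsq, hm1, hm2, rfl⟩
    refine ⟨(x1, x2), mem_Tset.mpr ⟨hx1, hx2, hsq⟩, ?_⟩
    rw [phi_eq hx1.1 hx2.1]
    unfold phi'
    have hp : Pg (Units.mk0 x1 hx1.1) (Units.mk0 x2 hx2.1) = p := by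
      apply Subtype.ext
      apply Prod.ext
      · apply Units.ext
        show ((Dg (Units.mk0 x1 hx1.1) : GL (Fin 2) F) : Matrix (Fin 2) (Fin 2) F) = _
        rw [Dg_val, Units.val_mk0, hm1]
      · apply Units.ext
        show ((Dg (Units.mk0 x2 hx2.1) : GL (Fin 2) F) : Matrix (Fin 2) (Fin 2) F) = _
        rw [Dg_val, Units.val_mk0, hm2]
    rw [hp]
  · rintro ⟨p, hp, rfl⟩
    obtain ⟨h1, h2, hsq⟩ := mem_Tset.mp hp
    refine ⟨Pg (Units.mk0 p.1 h1.1) (Units.mk0 p.2 h2.1), p.1, p.2, h1, h2, hsq, ?_, ?_, ?_⟩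
    · show ((Dg (Units.mk0 p.1 h1.1) : GL (Fin 2) F) : Matrix (Fin 2) (Fin 2) F) = _
      rw [Dg_val, Units.val_mk0]
    · show ((Dg (Units.mk0 p.2 h2.1) : GL (Fin 2) F) : Matrix (Fin 2) (Fin 2) F) = _
      rw [Dg_val, Units.val_mk0]
    · rw [phi_eq h1.1 h2.1]
      rfl

end C3C3

open C3C3 in
/-- The number of conjugacy classes of `SO₄(F)` containing an element of the form
`[(diag(x₁,x₁⁻¹), diag(x₂,x₂⁻¹))]`, with `x₁, x₂ ∉ {0,1,-1}` and not both `x₁² = -1`,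
`x₂² = -1`, equals `((q-3)²-4)/8` if `q ≡ 1 (mod 4)` and `(q-3)²/8` if `q ≡ 3 (mod 4)`. -/
theorem card_c3c3_classes (hq : Odd (Fintype.card F)) :
    (Fintype.card F % 4 = 1 →
      Nat.card {c : ConjClasses (SO4 F) // IsC3C3Class c} =
        ((Fintype.card F - 3) ^ 2 - 4) / 8) ∧
    (Fintype.card F % 4 = 3 →
      Nat.card {c : ConjClasses (SO4 F) // IsC3C3Class c} =
        (Fintype.card F - 3) ^ 2 / 8) := by
  classical
  have hchar : ringChar F ≠ 2 := by
    intro h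
    have h2 := FiniteField.even_card_of_char_two h
    rw [Nat.odd_iff] at hq
    omega
  have hm : (-1 : F) ≠ 1 := Ring.neg_one_ne_one_of_char_ne_two hchar
  have hm0 : (-1 : F) ≠ 0 := by
    intro h; exact one_ne_zero (neg_eq_zero.mp h)
  set k := ((Tset F).image (phi F)).card with hk
  -- the subtype of classes is in bijection with the image of `phi`
  have hsub : Nat.card {c : ConjClasses (SO4 F) // IsC3C3Class c} = k := by
    have hiff : ∀ c : ConjClasses (SO4 F), IsC3C3Class c ↔ c ∈ (Tset F).image (phi F) :=
      fun c => (isC3C3_iff c).trans Finset.mem_image.symm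
    rw [Nat.card_congr (Equiv.subtypeEquivRight hiff)]
    exact Nat.card_eq_finsetCard _
  -- each fiber has exactly 8 elements
  have hfiber : ∀ p ∈ Tset F, ((Tset F).filter (fun q => phi F q = phi F p)).card = 8 := by
    intro p hp
    obtain ⟨h1, h2, hsq⟩ := mem_Tset.mp hp
    have himg : (Tset F).filter (fun q => phi F q = phi F p)
        = Finset.image (fun b => act b p) Finset.univ := by
      ext q
      simp only [Finset.mem_filter, Finset.mem_image, Finset.mem_univ, true_and]
      constructor
      · rintro ⟨hq, hpq⟩
        obtain ⟨hq1, hq2, _⟩ := mem_Tset.mp hq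
        obtain ⟨b, rfl⟩ := phi_fiber h1.1 h2.1 hq1.1 hq2.1 hpq.symm
        exact ⟨b, rfl⟩
      · rintro ⟨b, rfl⟩
        exact ⟨mem_Tset.mpr (Tpred_act (mem_Tset.mp hp) b), phi_act h1.1 h2.1 b⟩
    rw [himg, Finset.card_image_of_injective _ (act_injective (mem_Tset.mp hp) hm)]
    simp
  have hkey : (Tset F).card = k * 8 := by
    rw [Finset.card_eq_sum_card_fiberwise
      (fun x hx => Finset.mem_image_of_mem (phi F) hx)]
    have : ∀ c ∈ (Tset F).image (phi F),
        ((Tset F).filter (fun q => phi F q = c)).card = 8 := by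
      intro c hc
      obtain ⟨p, hp, rfl⟩ := Finset.mem_image.mp hc
      exact hfiber p hp
    rw [Finset.sum_congr rfl this, Finset.sum_const, smul_eq_mul]
  -- counting the parameter set
  set S : Finset F := Finset.univ.filter (fun x : F => x ≠ 0 ∧ x ≠ 1 ∧ x ≠ -1) with hSdef
  have hScard : S.card = Fintype.card F - 3 := by
    have hSeq : S = Finset.univ \ {0, 1, -1} := by
      ext x
      simp [hSdef, not_or]
    rw [hSeq, Finset.card_sdiff_of_subset (Finset.subset_univ _), Finset.card_univ]
    congr 1
    have m1 : (0 : F) ∉ ({1, -1} : Finset F) := by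
      intro h
      rcases Finset.mem_insert.mp h with h | h
      · exact one_ne_zero h.symm
      · exact hm0 (Finset.mem_singleton.mp h).symm
    have m2 : (1 : F) ∉ ({-1} : Finset F) := fun h => hm (Finset.mem_singleton.mp h).symm
    rw [Finset.card_insert_of_notMem m1, Finset.card_insert_of_notMem m2,
      Finset.card_singleton]
  set R : Finset F := Finset.univ.filter (fun x : F => x ^ 2 = -1) with hRdef
  have hTeq : Tset F = (S ×ˢ S).filter (fun p => ¬(p.1 ^ 2 = -1 ∧ p.2 ^ 2 = -1)) := by
    ext p
    simp only [mem_Tset, Tpred, Finset.mem_filter, Finset.mem_product, hSdef,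
      Finset.mem_univ, true_and]
    tauto
  have hbadeq : (S ×ˢ S).filter (fun p : F × F => p.1 ^ 2 = -1 ∧ p.2 ^ 2 = -1)
      = (S.filter (fun x => x ^ 2 = -1)) ×ˢ (S.filter (fun x => x ^ 2 = -1)) := by
    ext p
    simp only [Finset.mem_filter, Finset.mem_product]
    tauto
  have hSR : S.filter (fun x => x ^ 2 = -1) = R := by
    ext x
    simp only [hRdef, hSdef, Finset.mem_filter, Finset.mem_univ, true_and, and_iff_right_iff_imp]
    intro hx
    refine ⟨?_, ?_, ?_⟩
    · rintro rfl
      rw [zero_pow (by norm_num)] at hx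
      exact hm0 hx.symm
    · rintro rfl
      rw [one_pow] at hx
      exact hm hx.symm
    · rintro rfl
      rw [neg_one_sq] at hx
      exact hm hx.symm
  have hsplit : (Tset F).card
      + ((S ×ˢ S).filter (fun p : F × F => p.1 ^ 2 = -1 ∧ p.2 ^ 2 = -1)).card
      = S.card * S.card := by
    rw [hTeq, ← Finset.card_product S S]
    rw [add_comm]
    exact Finset.card_filter_add_card_filter_not _
  rw [hbadeq, hSR, Finset.card_product] at hsplit
  have hq3 : Fintype.card F % 4 = 3 → R.card = 0 := by
    intro h3
    rw [Finset.card_eq_zero]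
    ext x
    simp only [hRdef, Finset.mem_filter, Finset.mem_univ, true_and, Finset.notMem_empty,
      iff_false]
    intro hx
    have : IsSquare (-1 : F) := ⟨x, by rw [← hx]; ring⟩
    rw [FiniteField.isSquare_neg_one_iff] at this
    exact this h3
  have hq1 : Fintype.card F % 4 = 1 → R.card = 2 := by
    intro h1
    have hsq : IsSquare (-1 : F) := FiniteField.isSquare_neg_one_iff.mpr (by omega)
    obtain ⟨i, hi⟩ := hsq
    have hi0 : i ≠ 0 := by
      rintro rfl
      rw [mul_zero] at hi
      exact hm0 hi
    have hine : i ≠ -i := by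
      intro h
      exact hm (mul_left_cancel₀ hi0 (by linear_combination -h : i * (-1 : F) = i * 1))
    have hReq : R = {i, -i} := by
      ext x
      simp only [hRdef, Finset.mem_filter, Finset.mem_univ, true_and, Finset.mem_insert,
        Finset.mem_singleton]
      constructor
      · intro hx
        have : (x - i) * (x + i) = 0 := by linear_combination hx + hi
        rcases mul_eq_zero.mp this with h | h
        · exact Or.inl (sub_eq_zero.mp h)
        · exact Or.inr (by linear_combination h)
      · rintro (rfl | rfl)
        · linear_combination -hi
        · linear_combination -hi
    rw [hReq, Finset.card_insert_of_notMem (by simpa using hine), Finset.card_singleton]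
  constructor
  · intro h14
    rw [hsub]
    rw [hq1 h14, hScard] at hsplit
    have hpow : (Fintype.card F - 3) ^ 2 = (Fintype.card F - 3) * (Fintype.card F - 3) := sq _
    omega
  · intro h34
    rw [hsub]
    rw [hq3 h34, hScard] at hsplit
    have hpow : (Fintype.card F - 3) ^ 2 = (Fintype.card F - 3) * (Fintype.card F - 3) := sq _
    omega
end

section
/- Fix a non-square Δ ∈ F^×. The number of conjugacy classes of SO₄(F) that contain an element of the form [(diag(x₁, Δx₁⁻¹), diag(x₂, Δx₂⁻¹))], with x₁, x₂ ∈ F^× and not both x₁² = −Δ and x₂² = −Δ, equals (q−1)²/8 if q ≡ 1 (mod 4), and equals ((q−1)² − 4)/8 if q ≡ 3 (mod 4). -/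
set_option linter.unusedSectionVars false

open Matrix

variable (F : Type*) [Field F] [Fintype F] [DecidableEq F]

/-- The property that a conjugacy class of `SO₄(F)` contains an element of the form
`[(diag(x₁,Δx₁⁻¹), diag(x₂,Δx₂⁻¹))]` with `x₁, x₂ ∈ F^×` and not both `x₁² = -Δ` and
`x₂² = -Δ`. -/
def IsC3DeltaClass {F : Type*} [Field F] [Fintype F] [DecidableEq F] (Δ : F)
    (c : ConjClasses (SO4 F)) : Prop :=
  ∃ p : GL22 F, ∃ x₁ x₂ : F, x₁ ≠ 0 ∧ x₂ ≠ 0 ∧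
    ¬(x₁ ^ 2 = -Δ ∧ x₂ ^ 2 = -Δ) ∧
    (p.val.1 : Matrix (Fin 2) (Fin 2) F) = Matrix.diagonal ![x₁, Δ * x₁⁻¹] ∧
    (p.val.2 : Matrix (Fin 2) (Fin 2) F) = Matrix.diagonal ![x₂, Δ * x₂⁻¹] ∧
    c = ConjClasses.mk (cls F p)

namespace C3Aux

variable {F : Type*} [Field F] [Fintype F] [DecidableEq F]

/-- The diagonal matrix `diag(x, Δ x⁻¹)`. -/
def dm (Δ x : F) : Matrix (Fin 2) (Fin 2) F := Matrix.diagonal ![x, Δ * x⁻¹]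

lemma dm_mul_inv (Δ x : F) (hΔ : Δ ≠ 0) (hx : x ≠ 0) :
    dm Δ x * dm Δ⁻¹ x⁻¹ = 1 := by
  simp only [dm, Matrix.diagonal_mul_diagonal]
  rw [show (fun i => ![x, Δ * x⁻¹] i * ![x⁻¹, Δ⁻¹ * x⁻¹⁻¹] i) = fun _ => 1 by
    funext i; fin_cases i <;> (simp; field_simp)]
  exact Matrix.diagonal_one

lemma inv_mul_dm (Δ x : F) (hΔ : Δ ≠ 0) (hx : x ≠ 0) :
    dm Δ⁻¹ x⁻¹ * dm Δ x = 1 := by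
  have := dm_mul_inv Δ⁻¹ x⁻¹ (inv_ne_zero hΔ) (inv_ne_zero hx)
  simpa using this

lemma det_dm (Δ x : F) (hx : x ≠ 0) : (dm Δ x).det = Δ := by
  simp [dm, Matrix.det_diagonal, Fin.prod_univ_two]
  field_simp

lemma trace_dm (Δ x : F) : (dm Δ x).trace = x + Δ * x⁻¹ := by
  simp [dm, Matrix.trace_diagonal, Fin.sum_univ_two]

/-- `diag(x, Δ x⁻¹)` as an element of `GL₂`. -/
def dU (Δ x : F) (hΔ : Δ ≠ 0) (hx : x ≠ 0) : GL (Fin 2) F :=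
  ⟨dm Δ x, dm Δ⁻¹ x⁻¹, dm_mul_inv Δ x hΔ hx, inv_mul_dm Δ x hΔ hx⟩

@[simp] lemma dU_coe (Δ x : F) (hΔ : Δ ≠ 0) (hx : x ≠ 0) :
    ((dU Δ x hΔ hx : GL (Fin 2) F) : Matrix (Fin 2) (Fin 2) F) = dm Δ x := rfl


/-- The parameter condition. -/
def Cond (Δ : F) (p : F × F) : Prop :=
  p.1 ≠ 0 ∧ p.2 ≠ 0 ∧ ¬(p.1 ^ 2 = -Δ ∧ p.2 ^ 2 = -Δ)

variable (Δ : F)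

/-- The parameter space. -/
abbrev XS (Δ : F) := {p : F × F // Cond Δ p}

instance : DecidablePred (Cond Δ) := fun p => by unfold Cond; infer_instance

variable {Δ} (hΔ0 : Δ ≠ 0)

/-- The pair of diagonal matrices as an element of `GL22`. -/
def PP (x : XS Δ) : GL22 F :=
  ⟨(dU Δ x.1.1 hΔ0 x.2.1, dU Δ x.1.2 hΔ0 x.2.2.1), by
    show Matrix.GeneralLinearGroup.det _ = Matrix.GeneralLinearGroup.det _
    apply Units.ext
    rw [Matrix.GeneralLinearGroup.val_det_apply, Matrix.GeneralLinearGroup.val_det_apply]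
    simp [det_dm Δ _ x.2.1, det_dm Δ _ x.2.2.1]⟩

/-- The conjugacy class of `[(diag(x₁,Δx₁⁻¹), diag(x₂,Δx₂⁻¹))]`. -/
noncomputable def ff (x : XS Δ) : ConjClasses (SO4 F) :=
  ConjClasses.mk (cls F (PP hΔ0 x))


/-- The swap matrix. -/
def Wm : Matrix (Fin 2) (Fin 2) F := !![0, 1; 1, 0]

/-- The matrix `diag(1,-1)`. -/
def Jm : Matrix (Fin 2) (Fin 2) F := !![1, 0; 0, -1]

lemma Wm_mul_Wm : (Wm : Matrix (Fin 2) (Fin 2) F) * Wm = 1 := by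
  simp [Wm]
  ext i j; fin_cases i <;> fin_cases j <;>
    simp [Matrix.mul_apply, Fin.sum_univ_two, Matrix.one_apply]

lemma Jm_mul_Jm : (Jm : Matrix (Fin 2) (Fin 2) F) * Jm = 1 := by
  simp [Jm]
  ext i j; fin_cases i <;> fin_cases j <;>
    simp [Matrix.mul_apply, Fin.sum_univ_two, Matrix.one_apply]

def WU : GL (Fin 2) F := ⟨Wm, Wm, Wm_mul_Wm, Wm_mul_Wm⟩
def JU : GL (Fin 2) F := ⟨Jm, Jm, Jm_mul_Jm, Jm_mul_Jm⟩

lemma det_eq_of (A B : GL (Fin 2) F) (h : (A : Matrix (Fin 2) (Fin 2) F).det = (B : Matrix (Fin 2) (Fin 2) F).det) :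
    Matrix.GeneralLinearGroup.det A = Matrix.GeneralLinearGroup.det B := by
  apply Units.ext
  rwa [Matrix.GeneralLinearGroup.val_det_apply, Matrix.GeneralLinearGroup.val_det_apply]

lemma det_Wm : (Wm : Matrix (Fin 2) (Fin 2) F).det = -1 := by
  simp [Wm, Matrix.det_fin_two]

lemma det_Jm : (Jm : Matrix (Fin 2) (Fin 2) F).det = -1 := by
  simp [Jm, Matrix.det_fin_two]

/-- `(W, J)` as an element of `GL22`. -/
def u1 : GL22 F := ⟨(WU, JU), det_eq_of _ _ (by rw [show ((WU : GL (Fin 2) F) : Matrix (Fin 2) (Fin 2) F) = Wm from rfl, show ((JU : GL (Fin 2) F) : Matrix (Fin 2) (Fin 2) F) = Jm from rfl, det_Wm, det_Jm])⟩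

/-- `(J, W)` as an element of `GL22`. -/
def u2 : GL22 F := ⟨(JU, WU), det_eq_of _ _ (by rw [show ((WU : GL (Fin 2) F) : Matrix (Fin 2) (Fin 2) F) = Wm from rfl, show ((JU : GL (Fin 2) F) : Matrix (Fin 2) (Fin 2) F) = Jm from rfl, det_Wm, det_Jm])⟩

lemma dm_eq (Δ x : F) : dm Δ x = !![x, 0; 0, Δ * x⁻¹] := by
  ext i j
  fin_cases i <;> fin_cases j <;> simp [dm]

lemma Wm_conj (x : F) (hΔ0 : Δ ≠ 0) (hx : x ≠ 0) :
    Wm * dm Δ x * Wm = dm Δ (Δ * x⁻¹) := by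
  have h1 : Δ * (Δ * x⁻¹)⁻¹ = x := by field_simp
  rw [dm_eq, dm_eq, h1, Wm]
  ext i j
  fin_cases i <;> fin_cases j <;>
    simp [Matrix.mul_apply, Fin.sum_univ_two]

lemma Jm_conj (x : F) : Jm * dm Δ x * Jm = dm Δ x := by
  rw [dm_eq, Jm]
  ext i j
  fin_cases i <;> fin_cases j <;>
    simp [Matrix.mul_apply, Fin.sum_univ_two]


lemma sq_flip {x : F} (hx : x ≠ 0) (hΔ0 : Δ ≠ 0) :
    (Δ * x⁻¹) ^ 2 = -Δ ↔ x ^ 2 = -Δ := by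
  constructor <;> intro h
  · field_simp at h
    have h1 : Δ * Δ = -x ^ 2 * Δ := by linear_combination Δ * h
    have h2 : Δ = -x ^ 2 := mul_right_cancel₀ hΔ0 h1
    rw [h2, neg_neg]
  · field_simp
    linear_combination h

/-- Flip the first coordinate. -/
def t1 (hΔ0 : Δ ≠ 0) (x : XS Δ) : XS Δ :=
  ⟨(Δ * x.1.1⁻¹, x.1.2), mul_ne_zero hΔ0 (inv_ne_zero x.2.1), x.2.2.1,
    fun h => x.2.2.2 ⟨(sq_flip x.2.1 hΔ0).1 h.1, h.2⟩⟩

/-- Flip the second coordinate. -/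
def t2 (hΔ0 : Δ ≠ 0) (x : XS Δ) : XS Δ :=
  ⟨(x.1.1, Δ * x.1.2⁻¹), x.2.1, mul_ne_zero hΔ0 (inv_ne_zero x.2.2.1),
    fun h => x.2.2.2 ⟨h.1, (sq_flip x.2.2.1 hΔ0).1 h.2⟩⟩

/-- Negate both coordinates. -/
def t3 (x : XS Δ) : XS Δ :=
  ⟨(-x.1.1, -x.1.2), neg_ne_zero.2 x.2.1, neg_ne_zero.2 x.2.2.1,
    fun h => x.2.2.2 ⟨by rw [← neg_sq]; exact h.1, by rw [← neg_sq]; exact h.2⟩⟩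

lemma PP_t1 (hΔ0 : Δ ≠ 0) (x : XS Δ) :
    PP hΔ0 (t1 hΔ0 x) = u1 * PP hΔ0 x * u1⁻¹ := by
  apply Subtype.ext
  apply Prod.ext <;> apply Units.ext
  · show dm Δ (Δ * x.1.1⁻¹) = Wm * dm Δ x.1.1 * Wm
    exact (Wm_conj _ hΔ0 x.2.1).symm
  · show dm Δ x.1.2 = Jm * dm Δ x.1.2 * Jm
    exact (Jm_conj _).symm

lemma PP_t2 (hΔ0 : Δ ≠ 0) (x : XS Δ) :
    PP hΔ0 (t2 hΔ0 x) = u2 * PP hΔ0 x * u2⁻¹ := by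
  apply Subtype.ext
  apply Prod.ext <;> apply Units.ext
  · show dm Δ x.1.1 = Jm * dm Δ x.1.1 * Jm
    exact (Jm_conj _).symm
  · show dm Δ (Δ * x.1.2⁻¹) = Wm * dm Δ x.1.2 * Wm
    exact (Wm_conj _ hΔ0 x.2.2.1).symm

lemma dm_neg (Δ x : F) : dm Δ (-x) = dm Δ x * (Matrix.scalar (Fin 2)) (-1 : F) := by
  ext i j
  fin_cases i <;> fin_cases j <;>
    simp [dm, Matrix.scalar_apply, Matrix.mul_apply, Fin.sum_univ_two,
      Matrix.diagonal, inv_neg] <;> ring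

lemma PP_t3 (hΔ0 : Δ ≠ 0) (x : XS Δ) :
    PP hΔ0 (t3 x) = PP hΔ0 x * scalarHom F (-1) := by
  apply Subtype.ext
  apply Prod.ext <;> apply Units.ext
  · show dm Δ (-x.1.1) = dm Δ x.1.1 * (Matrix.scalar (Fin 2)) ((-1 : Fˣ) : F)
    rw [dm_neg]; norm_num
  · show dm Δ (-x.1.2) = dm Δ x.1.2 * (Matrix.scalar (Fin 2)) ((-1 : Fˣ) : F)
    rw [dm_neg]; norm_num

lemma ff_t1 (hΔ0 : Δ ≠ 0) (x : XS Δ) : ff hΔ0 (t1 hΔ0 x) = ff hΔ0 x := by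
  unfold ff
  rw [PP_t1]
  have h : ConjClasses.mk (cls F (PP hΔ0 x)) =
      ConjClasses.mk (cls F (u1 * PP hΔ0 x * u1⁻¹)) :=
    ConjClasses.mk_eq_mk_iff_isConj.2 (isConj_iff.2 ⟨cls F u1, rfl⟩)
  exact h.symm

lemma ff_t2 (hΔ0 : Δ ≠ 0) (x : XS Δ) : ff hΔ0 (t2 hΔ0 x) = ff hΔ0 x := by
  unfold ff
  rw [PP_t2]
  have h : ConjClasses.mk (cls F (PP hΔ0 x)) =
      ConjClasses.mk (cls F (u2 * PP hΔ0 x * u2⁻¹)) :=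
    ConjClasses.mk_eq_mk_iff_isConj.2 (isConj_iff.2 ⟨cls F u2, rfl⟩)
  exact h.symm

lemma ff_t3 (hΔ0 : Δ ≠ 0) (x : XS Δ) : ff hΔ0 (t3 x) = ff hΔ0 x := by
  unfold ff
  rw [PP_t3]
  congr 1
  exact QuotientGroup.mk_mul_of_mem _ ⟨-1, rfl⟩


lemma trace_conj (V : GL (Fin 2) F) (M : Matrix (Fin 2) (Fin 2) F) :
    ((V : Matrix (Fin 2) (Fin 2) F) * M * ((V⁻¹ : GL (Fin 2) F) : Matrix (Fin 2) (Fin 2) F)).trace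
      = M.trace := by
  rw [Matrix.trace_mul_comm, ← mul_assoc,
    show (((V⁻¹ : GL (Fin 2) F) : Matrix (Fin 2) (Fin 2) F) * V) = 1 from by
      rw [← Units.val_mul, inv_mul_cancel, Units.val_one], one_mul]

lemma det_conj (V : GL (Fin 2) F) (M : Matrix (Fin 2) (Fin 2) F) :
    ((V : Matrix (Fin 2) (Fin 2) F) * M * ((V⁻¹ : GL (Fin 2) F) : Matrix (Fin 2) (Fin 2) F)).det
      = M.det := by
  rw [Matrix.det_mul, Matrix.det_mul, mul_comm, ← mul_assoc, ← Matrix.det_mul,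
    show (((V⁻¹ : GL (Fin 2) F) : Matrix (Fin 2) (Fin 2) F) * V) = 1 from by
      rw [← Units.val_mul, inv_mul_cancel, Units.val_one], Matrix.det_one, one_mul]

lemma det_scalar2 (a : F) : ((Matrix.scalar (Fin 2)) a).det = a ^ 2 := by
  simp [Matrix.scalar_apply, Matrix.det_diagonal, Fin.prod_univ_two, sq]

lemma trace_mul_scalar (M : Matrix (Fin 2) (Fin 2) F) (a : F) :
    (M * (Matrix.scalar (Fin 2)) a).trace = a * M.trace := by
  simp [Matrix.scalar_apply, Matrix.trace, Matrix.diag, Matrix.mul_diagonal,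
    Fin.sum_univ_two]
  ring

lemma quad {a x y Δ : F} (ha : a ^ 2 = 1) (hx : x ≠ 0) (hy : y ≠ 0)
    (h : y + Δ * y⁻¹ = a * (x + Δ * x⁻¹)) :
    y = a * x ∨ y = a * (Δ * x⁻¹) := by
  have h0 : (y - a * x) * (y - a * (Δ * x⁻¹)) = 0 := by
    field_simp at h
    have hxx : x⁻¹ * x = 1 := inv_mul_cancel₀ hx
    have h1 : ((y - a * x) * (y - a * (Δ * x⁻¹))) * x = 0 := by
      linear_combination h + (-a * Δ * y + a ^ 2 * Δ * x) * hxx + Δ * x * ha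
    exact (mul_eq_zero.mp h1).resolve_right hx
  rcases mul_eq_zero.1 h0 with h1 | h1
  · exact Or.inl (sub_eq_zero.mp h1)
  · exact Or.inr (sub_eq_zero.mp h1)

lemma back (hΔ0 : Δ ≠ 0) (x y : XS Δ) (h : ff hΔ0 x = ff hΔ0 y) :
    ∃ a : F, a ^ 2 = 1 ∧
      (y.1.1 = a * x.1.1 ∨ y.1.1 = a * (Δ * x.1.1⁻¹)) ∧
      (y.1.2 = a * x.1.2 ∨ y.1.2 = a * (Δ * x.1.2⁻¹)) := by
  unfold ff at h
  rw [ConjClasses.mk_eq_mk_iff_isConj, isConj_iff] at h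
  obtain ⟨z, hz⟩ := h
  obtain ⟨u, rfl⟩ := QuotientGroup.mk_surjective z
  have hz' : cls F (u * PP hΔ0 x * u⁻¹) = cls F (PP hΔ0 y) := hz
  obtain ⟨a, ha⟩ := QuotientGroup.eq.mp hz'.symm
  have key : PP hΔ0 y * scalarHom F a = u * PP hΔ0 x * u⁻¹ := by
    rw [ha, mul_inv_cancel_left]
  have k1 : (PP hΔ0 y).val.1 * sc F a = u.val.1 * (PP hΔ0 x).val.1 * (u.val.1)⁻¹ :=
    congrArg (fun p => p.val.1) key
  have k2 : (PP hΔ0 y).val.2 * sc F a = u.val.2 * (PP hΔ0 x).val.2 * (u.val.2)⁻¹ :=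
    congrArg (fun p => p.val.2) key
  have m1 : dm Δ y.1.1 * (Matrix.scalar (Fin 2)) ((a : F)) =
      ((u.val.1 : GL (Fin 2) F) : Matrix (Fin 2) (Fin 2) F) * dm Δ x.1.1 *
        (((u.val.1)⁻¹ : GL (Fin 2) F) : Matrix (Fin 2) (Fin 2) F) :=
    congrArg Units.val k1
  have m2 : dm Δ y.1.2 * (Matrix.scalar (Fin 2)) ((a : F)) =
      ((u.val.2 : GL (Fin 2) F) : Matrix (Fin 2) (Fin 2) F) * dm Δ x.1.2 *
        (((u.val.2)⁻¹ : GL (Fin 2) F) : Matrix (Fin 2) (Fin 2) F) :=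
    congrArg Units.val k2
  have hd := congrArg Matrix.det m1
  rw [Matrix.det_mul, det_dm _ _ y.2.1, det_scalar2, det_conj, det_dm _ _ x.2.1] at hd
  have ha2 : ((a : F)) ^ 2 = 1 := mul_left_cancel₀ hΔ0 (hd.trans (mul_one Δ).symm)
  have ht1 := congrArg Matrix.trace m1
  rw [trace_mul_scalar, trace_conj, trace_dm, trace_dm] at ht1
  have ht2 := congrArg Matrix.trace m2
  rw [trace_mul_scalar, trace_conj, trace_dm, trace_dm] at ht2
  have ht1' : y.1.1 + Δ * y.1.1⁻¹ = (a : F) * (x.1.1 + Δ * x.1.1⁻¹) := by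
    linear_combination (a : F) * ht1 - (y.1.1 + Δ * y.1.1⁻¹) * ha2
  have ht2' : y.1.2 + Δ * y.1.2⁻¹ = (a : F) * (x.1.2 + Δ * x.1.2⁻¹) := by
    linear_combination (a : F) * ht2 - (y.1.2 + Δ * y.1.2⁻¹) * ha2
  exact ⟨a, ha2, quad ha2 x.2.1 y.2.1 ht1', quad ha2 x.2.2.1 y.2.2.1 ht2'⟩


/-- sign from a Bool -/
def sg (e : Bool) : F := if e then -1 else 1

/-- choice of `x` or `Δ x⁻¹` from a Bool -/
def ch (Δ : F) (b : Bool) (x : F) : F := if b then Δ * x⁻¹ else x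

lemma sg_ne_zero (e : Bool) : (sg e : F) ≠ 0 := by
  cases e <;> simp [sg]

lemma ch_ne_zero {Δ x : F} (hΔ0 : Δ ≠ 0) (hx : x ≠ 0) (b : Bool) : ch Δ b x ≠ 0 := by
  cases b <;> simp [ch, hx, hΔ0]

lemma ch_inj {Δ x : F} (hx : x ≠ 0) (hns : ¬ ∃ c : F, c ≠ 0 ∧ Δ = c ^ 2)
    {b b' : Bool} (h : ch Δ b x = ch Δ b' x) : b = b' := by
  cases b <;> cases b' <;> simp [ch] at h ⊢
  · exact hns ⟨x, hx, by field_simp at h; linear_combination -h⟩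
  · exact hns ⟨x, hx, by field_simp at h; linear_combination h⟩

lemma ch_neg {Δ x : F} (hΔ0 : Δ ≠ 0) (hx : x ≠ 0) (h2 : (2 : F) ≠ 0)
    {b b' : Bool} (h : ch Δ b x = -(ch Δ b' x)) : x ^ 2 = -Δ := by
  cases b <;> cases b' <;> simp [ch] at h
  · exfalso
    apply hx
    have : (2 : F) * x = 0 := by linear_combination h
    exact (mul_eq_zero.mp this).resolve_left h2
  · field_simp at h
    linear_combination h
  · field_simp at h
    linear_combination h
  · exfalso
    have hx' : Δ * x⁻¹ ≠ 0 := mul_ne_zero hΔ0 (inv_ne_zero hx)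
    apply hx'
    have : (2 : F) * (Δ * x⁻¹) = 0 := by linear_combination h
    exact (mul_eq_zero.mp this).resolve_left h2

/-- The 8 orbit elements. -/
def gfun (hΔ0 : Δ ≠ 0) (x₀ : XS Δ) : Bool × Bool × Bool → XS Δ := fun bits =>
  (if bits.1 then t3 else id)
    ((if bits.2.1 then t1 hΔ0 else id) ((if bits.2.2 then t2 hΔ0 else id) x₀))

lemma gfun_val (hΔ0 : Δ ≠ 0) (x₀ : XS Δ) (e b₁ b₂ : Bool) :
    (gfun hΔ0 x₀ (e, b₁, b₂)).1 = (sg e * ch Δ b₁ x₀.1.1, sg e * ch Δ b₂ x₀.1.2) := by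
  cases e <;> cases b₁ <;> cases b₂ <;> simp [gfun, sg, ch, t1, t2, t3]

lemma ff_gfun (hΔ0 : Δ ≠ 0) (x₀ : XS Δ) (bits : Bool × Bool × Bool) :
    ff hΔ0 (gfun hΔ0 x₀ bits) = ff hΔ0 x₀ := by
  obtain ⟨e, b1, b2⟩ := bits
  cases e <;> cases b1 <;> cases b2 <;>
    simp [gfun, ff_t1, ff_t2, ff_t3]


lemma gfun_inj (hΔ0 : Δ ≠ 0) (h2 : (2 : F) ≠ 0) (hns : ¬ ∃ c : F, c ≠ 0 ∧ Δ = c ^ 2)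
    (x₀ : XS Δ) : Function.Injective (gfun hΔ0 x₀) := by
  rintro ⟨e, b1, b2⟩ ⟨e', b1', b2'⟩ h
  have hv := congrArg Subtype.val h
  rw [gfun_val, gfun_val, Prod.mk.injEq] at hv
  obtain ⟨h1, h2'⟩ := hv
  by_cases he : e = e'
  · subst he
    have c1 := mul_left_cancel₀ (sg_ne_zero e) h1
    have c2 := mul_left_cancel₀ (sg_ne_zero e) h2'
    rw [ch_inj x₀.2.1 hns c1, ch_inj x₀.2.2.1 hns c2]
  · exfalso
    have hsg : (sg e : F) = -(sg e') := by
      cases e <;> cases e' <;> simp_all [sg]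
    apply x₀.2.2.2
    have d1 : ch Δ b1 x₀.1.1 = -(ch Δ b1' x₀.1.1) := by
      have hh : sg e' * ch Δ b1' x₀.1.1 = sg e' * (-(ch Δ b1 x₀.1.1)) := by
        rw [← h1, hsg]; ring
      have := mul_left_cancel₀ (sg_ne_zero e') hh
      rw [this, neg_neg]
    have d2 : ch Δ b2 x₀.1.2 = -(ch Δ b2' x₀.1.2) := by
      have hh : sg e' * ch Δ b2' x₀.1.2 = sg e' * (-(ch Δ b2 x₀.1.2)) := by
        rw [← h2', hsg]; ring
      have := mul_left_cancel₀ (sg_ne_zero e') hh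
      rw [this, neg_neg]
    exact ⟨ch_neg hΔ0 x₀.2.1 h2 d1, ch_neg hΔ0 x₀.2.2.1 h2 d2⟩

lemma fiber_card (hΔ0 : Δ ≠ 0) (h2 : (2 : F) ≠ 0) (hns : ¬ ∃ c : F, c ≠ 0 ∧ Δ = c ^ 2)
    (x₀ : XS Δ) :
    Nat.card {y : XS Δ // ff hΔ0 y = ff hΔ0 x₀} = 8 := by
  have hbij : Function.Bijective
      (fun bits => (⟨gfun hΔ0 x₀ bits, ff_gfun hΔ0 x₀ bits⟩ :
        {y : XS Δ // ff hΔ0 y = ff hΔ0 x₀})) := by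
    constructor
    · intro a b hab
      exact gfun_inj hΔ0 h2 hns x₀ (Subtype.ext_iff.mp hab)
    · rintro ⟨y, hy⟩
      have mk : ∀ (e b1 b2 : Bool),
          (sg e * ch Δ b1 x₀.1.1, sg e * ch Δ b2 x₀.1.2) = y.1 →
          ∃ bits, (⟨gfun hΔ0 x₀ bits, ff_gfun hΔ0 x₀ bits⟩ :
            {y : XS Δ // ff hΔ0 y = ff hΔ0 x₀}) = ⟨y, hy⟩ := by
        intro e b1 b2 hval
        exact ⟨(e, b1, b2), Subtype.ext (Subtype.ext ((gfun_val hΔ0 x₀ e b1 b2).trans hval))⟩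
      obtain ⟨a, ha2, hc1, hc2⟩ := back hΔ0 x₀ y hy.symm
      have ha : a = 1 ∨ a = -1 := by
        have hfac : (a - 1) * (a + 1) = 0 := by linear_combination ha2
        rcases mul_eq_zero.mp hfac with h | h
        · exact Or.inl (by linear_combination h)
        · exact Or.inr (by linear_combination h)
      have hy1 : y.1 = (y.1.1, y.1.2) := rfl
      rcases ha with rfl | rfl <;> rcases hc1 with h1 | h1 <;> rcases hc2 with hh2 | hh2
      · exact mk false false false (by rw [hy1, h1, hh2]; simp [sg, ch])
      · exact mk false false true (by rw [hy1, h1, hh2]; simp [sg, ch])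
      · exact mk false true false (by rw [hy1, h1, hh2]; simp [sg, ch])
      · exact mk false true true (by rw [hy1, h1, hh2]; simp [sg, ch])
      · exact mk true false false (by rw [hy1, h1, hh2]; simp [sg, ch])
      · exact mk true false true (by rw [hy1, h1, hh2]; simp [sg, ch])
      · exact mk true true false (by rw [hy1, h1, hh2]; simp [sg, ch])
      · exact mk true true true (by rw [hy1, h1, hh2]; simp [sg, ch])
  rw [← Nat.card_congr (Equiv.ofBijective _ hbij)]
  simp [Nat.card_eq_fintype_card]


/-- The classifying map into the subtype of conjugacy classes. -/
noncomputable def fC (hΔ0 : Δ ≠ 0) (x : XS Δ) :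
    {c : ConjClasses (SO4 F) // IsC3DeltaClass Δ c} :=
  ⟨ff hΔ0 x, ⟨PP hΔ0 x, x.1.1, x.1.2, x.2.1, x.2.2.1, x.2.2.2, rfl, rfl, rfl⟩⟩

lemma fC_surj (hΔ0 : Δ ≠ 0) : Function.Surjective (fC hΔ0) := by
  rintro ⟨cval, p, x₁, x₂, hx1, hx2, hcond, hm1, hm2, hceq⟩
  refine ⟨⟨(x₁, x₂), hx1, hx2, hcond⟩, ?_⟩
  apply Subtype.ext
  show ff hΔ0 _ = cval
  rw [hceq]
  unfold ff
  congr 1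
  congr 1
  apply Subtype.ext
  apply Prod.ext <;> apply Units.ext
  · exact hm1.symm
  · exact hm2.symm

lemma main_count (hΔ0 : Δ ≠ 0) (h2 : (2 : F) ≠ 0)
    (hns : ¬ ∃ c : F, c ≠ 0 ∧ Δ = c ^ 2) :
    Nat.card (XS Δ) = 8 * Nat.card {c : ConjClasses (SO4 F) // IsC3DeltaClass Δ c} := by
  classical
  letI : Fintype {c : ConjClasses (SO4 F) // IsC3DeltaClass Δ c} :=
    Fintype.ofSurjective (fC hΔ0) (fC_surj hΔ0)
  have hfib : ∀ c : {c : ConjClasses (SO4 F) // IsC3DeltaClass Δ c},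
      Fintype.card {y : XS Δ // fC hΔ0 y = c} = 8 := by
    intro c
    obtain ⟨x₀, rfl⟩ := fC_surj hΔ0 c
    have he : ∀ y : XS Δ, fC hΔ0 y = fC hΔ0 x₀ ↔ ff hΔ0 y = ff hΔ0 x₀ := by
      intro y
      constructor
      · intro h; exact Subtype.ext_iff.mp h
      · intro h; exact Subtype.ext h
    rw [← Nat.card_eq_fintype_card, Nat.card_congr (Equiv.subtypeEquivRight he)]
    exact fiber_card hΔ0 h2 hns x₀
  rw [Nat.card_eq_fintype_card, Nat.card_eq_fintype_card]
  rw [← Fintype.card_congr (Equiv.sigmaFiberEquiv (fC hΔ0))]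
  rw [Fintype.card_sigma]
  simp [hfib, mul_comm]


lemma card_ne_zero : (Finset.univ.filter (fun x : F => x ≠ 0)).card = Fintype.card F - 1 := by
  rw [Finset.filter_ne' Finset.univ 0, Finset.card_erase_of_mem (Finset.mem_univ 0),
    Finset.card_univ]

lemma card_XS_A (hΔ0 : Δ ≠ 0) (hA : ∀ x : F, x ^ 2 ≠ -Δ) :
    Nat.card (XS Δ) = (Fintype.card F - 1) ^ 2 := by
  rw [Nat.card_eq_fintype_card, Fintype.card_subtype]
  have he : Finset.univ.filter (Cond Δ) =
      (Finset.univ.filter (fun x : F => x ≠ 0)) ×ˢ (Finset.univ.filter (fun x : F => x ≠ 0)) := by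
    ext p
    simp only [Finset.mem_filter, Finset.mem_product, Finset.mem_univ, true_and, Cond]
    have := hA p.1
    tauto
  rw [he, Finset.card_product, card_ne_zero, sq]

lemma card_XS_B (hΔ0 : Δ ≠ 0) (h2 : (2 : F) ≠ 0) (r : F) (hr : r ^ 2 = -Δ) :
    Nat.card (XS Δ) = (Fintype.card F - 1) ^ 2 - 4 := by
  have hr0 : r ≠ 0 := by
    intro h; rw [h] at hr; simp at hr; exact hΔ0 hr
  have hrr : r ≠ -r := by
    intro h
    apply hr0
    have : (2 : F) * r = 0 := by linear_combination h
    exact (mul_eq_zero.mp this).resolve_left h2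
  have hroots : ∀ x : F, x ^ 2 = -Δ ↔ (x = r ∨ x = -r) := by
    intro x
    constructor
    · intro h
      have : (x - r) * (x + r) = 0 := by linear_combination h - hr
      rcases mul_eq_zero.mp this with h' | h'
      · exact Or.inl (by linear_combination h')
      · exact Or.inr (by linear_combination h')
    · rintro (rfl | rfl)
      · exact hr
      · rw [neg_sq]; exact hr
  have hsqne : ∀ x : F, x ^ 2 = -Δ → x ≠ 0 := by
    intro x h hx
    rw [hx] at h; simp at h; exact hΔ0 h
  rw [Nat.card_eq_fintype_card, Fintype.card_subtype]
  have he : Finset.univ.filter (Cond Δ) =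
      ((Finset.univ ×ˢ Finset.univ).filter (fun p : F × F => p.1 ≠ 0 ∧ p.2 ≠ 0)) \
      ((Finset.univ ×ˢ Finset.univ).filter
        (fun p : F × F => p.1 ^ 2 = -Δ ∧ p.2 ^ 2 = -Δ)) := by
    ext p
    simp only [Finset.mem_filter, Finset.mem_sdiff, Finset.mem_product, Finset.mem_univ,
      true_and, Finset.mem_filter, Cond]
    have h1 := hsqne p.1
    have h2' := hsqne p.2
    tauto
  have he1 : (Finset.univ ×ˢ Finset.univ).filter (fun p : F × F => p.1 ≠ 0 ∧ p.2 ≠ 0) =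
      (Finset.univ.filter (fun x : F => x ≠ 0)) ×ˢ (Finset.univ.filter (fun x : F => x ≠ 0)) := by
    ext p
    simp [Finset.mem_product]
  have he2 : (Finset.univ ×ˢ Finset.univ).filter
        (fun p : F × F => p.1 ^ 2 = -Δ ∧ p.2 ^ 2 = -Δ) =
      (Finset.univ.filter (fun x : F => x ^ 2 = -Δ)) ×ˢ
        (Finset.univ.filter (fun x : F => x ^ 2 = -Δ)) := by
    ext p
    simp [Finset.mem_product]
  have hset : Finset.univ.filter (fun x : F => x ^ 2 = -Δ) = {r, -r} := by
    ext x
    simp [hroots x]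
  rw [he, Finset.card_sdiff_of_subset]
  · rw [he1, he2, Finset.card_product, Finset.card_product, card_ne_zero, hset,
      Finset.card_pair hrr, sq]
  · intro p hp
    simp only [Finset.mem_filter, Finset.mem_product, Finset.mem_univ, true_and] at hp ⊢
    exact ⟨hsqne p.1 hp.1, hsqne p.2 hp.2⟩

end C3Aux


/-- For a fixed non-square `Δ ∈ F^×`, the number of conjugacy classes of `SO₄(F)` containing
an element of the form `[(diag(x₁,Δx₁⁻¹), diag(x₂,Δx₂⁻¹))]`, with `x₁, x₂ ∈ F^×` and not both
`x₁² = -Δ`, `x₂² = -Δ`, equals `(q-1)²/8` if `q ≡ 1 (mod 4)` and `((q-1)²-4)/8` if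
`q ≡ 3 (mod 4)`. -/
theorem card_c3Delta_classes (hq : Odd (Fintype.card F)) (Δ : F) (hΔ0 : Δ ≠ 0)
    (hΔ : ¬ ∃ c : F, c ≠ 0 ∧ Δ = c ^ 2) :
    (Fintype.card F % 4 = 1 →
      Nat.card {c : ConjClasses (SO4 F) // IsC3DeltaClass Δ c} =
        (Fintype.card F - 1) ^ 2 / 8) ∧
    (Fintype.card F % 4 = 3 →
      Nat.card {c : ConjClasses (SO4 F) // IsC3DeltaClass Δ c} =
        ((Fintype.card F - 1) ^ 2 - 4) / 8) := by
  have hqodd : Fintype.card F % 2 = 1 := Nat.odd_iff.mp hq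
  have hchar : ringChar F ≠ 2 := by
    intro h
    have := FiniteField.even_card_iff_char_two.mp h
    omega
  have h2 : (2 : F) ≠ 0 := Ring.two_ne_zero hchar
  constructor
  · intro h1
    have hA : ∀ x : F, x ^ 2 ≠ -Δ := by
      intro x hx2
      have hx0 : x ≠ 0 := by
        intro h0
        apply hΔ0
        rw [h0] at hx2
        simpa [eq_comm, neg_eq_zero] using hx2
      have hsq : IsSquare (-1 : F) := FiniteField.isSquare_neg_one_iff.mpr (by omega)
      obtain ⟨c, hc⟩ := hsq
      have hc0 : c ≠ 0 := by
        intro h0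
        rw [h0] at hc
        simp at hc
      refine hΔ ⟨c * x, mul_ne_zero hc0 hx0, ?_⟩
      rw [mul_pow, hx2, show c ^ 2 = -1 from by rw [sq]; exact hc.symm]
      ring
    have hcount := C3Aux.main_count (F := F) hΔ0 h2 hΔ
    rw [C3Aux.card_XS_A hΔ0 hA] at hcount
    rw [hcount]
    omega
  · intro h3
    have hq2 : Fintype.card F / 2 * 2 = Fintype.card F - 1 := by omega
    have dich : ∀ x : F, x ≠ 0 →
        x ^ (Fintype.card F / 2) = 1 ∨ x ^ (Fintype.card F / 2) = -1 := by
      intro x hx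
      have hpow : (x ^ (Fintype.card F / 2)) ^ 2 = 1 := by
        rw [← pow_mul, show Fintype.card F / 2 * 2 = Fintype.card F - 1 by omega]
        exact FiniteField.pow_card_sub_one_eq_one x hx
      have hfac : (x ^ (Fintype.card F / 2) - 1) * (x ^ (Fintype.card F / 2) + 1) = 0 := by
        linear_combination hpow
      rcases mul_eq_zero.mp hfac with h | h
      · exact Or.inl (by linear_combination h)
      · exact Or.inr (by linear_combination h)
    have hm1 : (-1 : F) ^ (Fintype.card F / 2) = -1 := by
      have hnsq : ¬ IsSquare (-1 : F) := by
        rw [FiniteField.isSquare_neg_one_iff]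
        omega
      rcases dich (-1) (by simp) with h | h
      · exact absurd ((FiniteField.isSquare_iff hchar (by simp : (-1 : F) ≠ 0)).mpr h) hnsq
      · exact h
    have hΔpow : Δ ^ (Fintype.card F / 2) = -1 := by
      rcases dich Δ hΔ0 with h | h
      · exfalso
        obtain ⟨c, hc⟩ := (FiniteField.isSquare_iff hchar hΔ0).mpr h
        refine hΔ ⟨c, ?_, by rw [hc, sq]⟩
        intro h0
        rw [h0] at hc
        simp at hc
        exact hΔ0 hc
      · exact h
    have hsqmΔ : IsSquare (-Δ : F) := by
      rw [FiniteField.isSquare_iff hchar (neg_ne_zero.mpr hΔ0)]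
      rw [show (-Δ : F) = -1 * Δ by ring, mul_pow, hm1, hΔpow]
      ring
    obtain ⟨r, hrr⟩ := hsqmΔ
    have hr : r ^ 2 = -Δ := by rw [sq]; exact hrr.symm
    have hcount := C3Aux.main_count (F := F) hΔ0 h2 hΔ
    rw [C3Aux.card_XS_B hΔ0 h2 r hr] at hcount
    rw [hcount]
    omega
end

section
/- Let A, A' ∈ GL₂(F) with det A = det A' = 1 and with both characteristic polynomials irreducible over F. The classes [(I₂, A)] and [(I₂, A')] are conjugate in SO₄(F) if and only if A and A' have the same characteristic polynomial. -/
set_option linter.unusedSectionVars false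

open Matrix

variable (F : Type*) [Field F] [Fintype F] [DecidableEq F]

open Polynomial in
lemma charpoly_fin_two' (M : Matrix (Fin 2) (Fin 2) F) :
    M.charpoly = X ^ 2 - C M.trace * X + C M.det := by
  rw [Matrix.charpoly, Matrix.det_fin_two]
  simp [charmatrix_apply_eq, charmatrix_apply_ne, Matrix.trace_fin_two, Matrix.det_fin_two]
  ring

lemma charpoly_units_conj' (P : (Matrix (Fin 2) (Fin 2) F)ˣ) (N : Matrix (Fin 2) (Fin 2) F) :
    ((P : Matrix (Fin 2) (Fin 2) F) * N * (↑P⁻¹ : Matrix (Fin 2) (Fin 2) F)).charpoly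
      = N.charpoly := by
  rw [charpoly_fin_two', charpoly_fin_two', Matrix.trace_units_conj, Matrix.det_units_conj]

open Polynomial in
lemma entry_ne_zero_of_irred (A : Matrix (Fin 2) (Fin 2) F)
    (h : Irreducible A.charpoly) : A 1 0 ≠ 0 := by
  intro hc
  have hfac : A.charpoly = (X - C (A 0 0)) * (X - C (A 1 1)) := by
    rw [charpoly_fin_two', Matrix.trace_fin_two, Matrix.det_fin_two, hc]
    rw [mul_zero, sub_zero, C_mul, C_add]
    ring
  rcases h.2 hfac with hu | hu
  · exact Polynomial.not_isUnit_X_sub_C _ hu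
  · exact Polynomial.not_isUnit_X_sub_C _ hu

lemma rel_companion (A : Matrix (Fin 2) (Fin 2) F) :
    A * !![1, A 0 0; 0, A 1 0] = !![1, A 0 0; 0, A 1 0] * !![0, -A.det; 1, A.trace] := by
  ext i j
  fin_cases i <;> fin_cases j <;>
    simp [Matrix.mul_apply, Fin.sum_univ_two, Matrix.det_fin_two, Matrix.trace_fin_two] <;> ring

lemma exists_conj_mat (A A' : Matrix (Fin 2) (Fin 2) F)
    (ht : A.trace = A'.trace) (hd : A.det = A'.det)
    (hirr : Irreducible A.charpoly) (hirr' : Irreducible A'.charpoly) :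
    ∃ h : GL (Fin 2) F, (h : Matrix (Fin 2) (Fin 2) F) * A = A' * h := by
  have hc := entry_ne_zero_of_irred F A hirr
  have hc' := entry_ne_zero_of_irred F A' hirr'
  have hdM : (!![1, A 0 0; 0, A 1 0] : Matrix (Fin 2) (Fin 2) F).det ≠ 0 := by
    simpa [Matrix.det_fin_two] using hc
  have hdM' : (!![1, A' 0 0; 0, A' 1 0] : Matrix (Fin 2) (Fin 2) F).det ≠ 0 := by
    simpa [Matrix.det_fin_two] using hc'
  set U : GL (Fin 2) F := Matrix.GeneralLinearGroup.mkOfDetNeZero _ hdM with hU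
  set U' : GL (Fin 2) F := Matrix.GeneralLinearGroup.mkOfDetNeZero _ hdM' with hU'
  have hUval : (U : Matrix (Fin 2) (Fin 2) F) = !![1, A 0 0; 0, A 1 0] := rfl
  have hU'val : (U' : Matrix (Fin 2) (Fin 2) F) = !![1, A' 0 0; 0, A' 1 0] := rfl
  refine ⟨U' * U⁻¹, ?_⟩
  have h1 : A * (U : Matrix (Fin 2) (Fin 2) F)
      = (U : Matrix (Fin 2) (Fin 2) F) * !![0, -A.det; 1, A.trace] := by
    rw [hUval]; exact rel_companion F A
  have h2 : A' * (U' : Matrix (Fin 2) (Fin 2) F)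
      = (U' : Matrix (Fin 2) (Fin 2) F) * !![0, -A.det; 1, A.trace] := by
    rw [hU'val, ht, hd]; exact rel_companion F A'
  have h3 : (↑U⁻¹ : Matrix (Fin 2) (Fin 2) F) * A
      = !![0, -A.det; 1, A.trace] * (↑U⁻¹ : Matrix (Fin 2) (Fin 2) F) := by
    calc (↑U⁻¹ : Matrix (Fin 2) (Fin 2) F) * A
        = (↑U⁻¹ : Matrix (Fin 2) (Fin 2) F) * (A * ↑U) * ↑U⁻¹ := by
          rw [mul_assoc, mul_assoc, U.mul_inv, mul_one]
      _ = (↑U⁻¹ : Matrix (Fin 2) (Fin 2) F) * (↑U * !![0, -A.det; 1, A.trace]) * ↑U⁻¹ := by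
          rw [h1]
      _ = !![0, -A.det; 1, A.trace] * (↑U⁻¹ : Matrix (Fin 2) (Fin 2) F) := by
          rw [← mul_assoc, U.inv_mul, one_mul]
  calc (↑(U' * U⁻¹) : Matrix (Fin 2) (Fin 2) F) * A
      = (U' : Matrix (Fin 2) (Fin 2) F) * ((↑U⁻¹ : Matrix (Fin 2) (Fin 2) F) * A) := by
        simp [mul_assoc]
    _ = (U' : Matrix (Fin 2) (Fin 2) F) * !![0, -A.det; 1, A.trace] * (↑U⁻¹ : Matrix (Fin 2) (Fin 2) F) := by
        rw [h3, mul_assoc]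
    _ = A' * ↑(U' * U⁻¹) := by rw [← h2]; simp [mul_assoc]


/-- For `A, A'` of determinant one with irreducible characteristic polynomials, the classes
`[(I₂, A)]` and `[(I₂, A')]` are conjugate in `SO₄(F)` iff `A` and `A'` have the same
characteristic polynomial. -/
theorem conj_c1c4_iff (hq : Odd (Fintype.card F)) (A A' : GL (Fin 2) F)
    (hA : Matrix.det (A : Matrix (Fin 2) (Fin 2) F) = 1)
    (hA' : Matrix.det (A' : Matrix (Fin 2) (Fin 2) F) = 1)
    (hAirr : Irreducible (Matrix.charpoly (A : Matrix (Fin 2) (Fin 2) F)))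
    (hA'irr : Irreducible (Matrix.charpoly (A' : Matrix (Fin 2) (Fin 2) F)))
    (p q : GL22 F) (hp : p.val = (1, A)) (hq' : q.val = (1, A')) :
    IsConj (cls F p) (cls F q) ↔
      Matrix.charpoly (A : Matrix (Fin 2) (Fin 2) F) =
        Matrix.charpoly (A' : Matrix (Fin 2) (Fin 2) F) := by
  constructor
  · rintro ⟨c, hc⟩
    obtain ⟨x, hx⟩ := QuotientGroup.mk'_surjective (scalarHom F).range (↑c)
    rw [← hx] at hc
    have hc' : (QuotientGroup.mk (x * p) : SO4 F) = QuotientGroup.mk (q * x) := by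
      simpa only [cls, SemiconjBy, QuotientGroup.mk'_apply, ← QuotientGroup.mk_mul] using hc
    obtain ⟨a, ha⟩ := QuotientGroup.eq.mp hc'
    have hxa : x * p * scalarHom F a = q * x := by
      rw [ha, ← mul_assoc, mul_inv_cancel, one_mul]
    have h1 : x.val.1 * p.val.1 * (sc F a) = q.val.1 * x.val.1 :=
      congrArg (fun z => z.val.1) hxa
    have h2 : x.val.2 * p.val.2 * (sc F a) = q.val.2 * x.val.2 :=
      congrArg (fun z => z.val.2) hxa
    rw [hp, hq'] at h1 h2
    simp only [mul_one, one_mul] at h1 h2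
    have hsc : sc F a = 1 := by
      have h1' : x.val.1 * sc F a = x.val.1 * 1 := by rw [mul_one]; exact h1
      exact mul_left_cancel h1'
    rw [hsc, mul_one] at h2
    have h4 : x.val.2 * A * (x.val.2)⁻¹ = A' := by
      rw [h2, mul_assoc, mul_inv_cancel, mul_one]
    conv_rhs => rw [← h4]
    rw [Units.val_mul, Units.val_mul]
    exact (charpoly_units_conj' F (x.val.2) A).symm
  · intro h
    have ht : Matrix.trace (A : Matrix (Fin 2) (Fin 2) F)
        = Matrix.trace (A' : Matrix (Fin 2) (Fin 2) F) := by
      rw [Matrix.trace_eq_neg_charpoly_coeff, Matrix.trace_eq_neg_charpoly_coeff, h]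
    have hd : Matrix.det (A : Matrix (Fin 2) (Fin 2) F)
        = Matrix.det (A' : Matrix (Fin 2) (Fin 2) F) := by rw [hA, hA']
    obtain ⟨h2, hh2⟩ := exists_conj_mat F A A' ht hd hAirr hA'irr
    set d : Fˣ := Matrix.GeneralLinearGroup.det h2 with hdd
    have hdg : (!![(d : F), 0; 0, 1] : Matrix (Fin 2) (Fin 2) F).det ≠ 0 := by
      simp [Matrix.det_fin_two_of]
    set g : GL (Fin 2) F := Matrix.GeneralLinearGroup.mkOfDetNeZero _ hdg with hg
    have hmem : (g, h2) ∈ GL22 F := by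
      show Matrix.GeneralLinearGroup.det g = Matrix.GeneralLinearGroup.det h2
      apply Units.ext
      show (!![(d : F), 0; 0, 1] : Matrix (Fin 2) (Fin 2) F).det
        = Matrix.det (h2 : Matrix (Fin 2) (Fin 2) F)
      rw [Matrix.det_fin_two_of]
      show (d : F) * 1 - 0 * 0 = (d : F)
      ring
    set x : GL22 F := ⟨(g, h2), hmem⟩ with hxdef
    have hsemi : x * p = q * x := by
      apply Subtype.ext
      apply Prod.ext
      · show g * p.val.1 = q.val.1 * g
        rw [hp, hq']
        show g * 1 = 1 * g
        rw [mul_one, one_mul]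
      · show h2 * p.val.2 = q.val.2 * h2
        rw [hp, hq']
        show h2 * A = A' * h2
        exact Units.ext hh2
    have hconj : IsConj p q := isConj_iff.mpr ⟨x, by
      rw [hsemi, mul_assoc, mul_inv_cancel, mul_one]⟩
    exact (QuotientGroup.mk' (scalarHom F).range).map_isConj hconj
end

section
/- The number of conjugacy classes of SO₄(F) that contain an element of the form [(I₂, A)], where A ∈ GL₂(F) has det A = 1 and irreducible characteristic polynomial over F, is exactly (q−1)/2. -/
set_option linter.unusedSectionVars false

noncomputable section AuxC1C4
namespace AuxC1C4
open Matrix Polynomial Finset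

variable {F : Type*} [Field F] [Fintype F] [DecidableEq F]

/-- `u + u⁻¹` as a map `Fˣ → F`. -/
noncomputable def f (u : Fˣ) : F := (u : F) + (u⁻¹ : Fˣ)

lemma f_eq_iff (u v : Fˣ) : f v = f u ↔ v = u ∨ v = u⁻¹ := by
  constructor
  · intro h
    unfold f at h
    have hvi : ((v⁻¹:Fˣ):F) = (v:F)⁻¹ := by simp
    have hui : ((u⁻¹:Fˣ):F) = (u:F)⁻¹ := by simp
    rw [hvi, hui] at h
    have hv1 : (v:F) * (v:F)⁻¹ = 1 := mul_inv_cancel₀ (Units.ne_zero v)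
    have hu1 : (u:F) * (u:F)⁻¹ = 1 := mul_inv_cancel₀ (Units.ne_zero u)
    have key : ((v:F) - u) * ((v:F) * u - 1) = 0 := by
      linear_combination (↑v*↑u)*h - ↑u*hv1 + ↑v*hu1
    rcases mul_eq_zero.1 key with h1 | h1
    · left; ext; exact sub_eq_zero.1 h1
    · right
      have h2 : (v:F) * u = 1 := by linear_combination h1
      have h3 : v * u = 1 := by ext; push_cast; exact h2
      exact eq_inv_of_mul_eq_one_left h3
  · rintro (rfl | rfl)
    · rfl
    · unfold f; rw [inv_inv, add_comm]

lemma fiber_eq (u : Fˣ) : (univ.filter (fun v => f v = f u)) = {u, u⁻¹} := by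
  ext v; simp [f_eq_iff]

lemma f_one : f (1:Fˣ) = (2:F) := by unfold f; norm_num
lemma f_negone : f (-1:Fˣ) = (-2:F) := by unfold f; norm_num

lemma fiber_card (u : Fˣ) :
    (univ.filter (fun v => f v = f u)).card = if f u = 2 ∨ f u = -2 then 1 else 2 := by
  rw [fiber_eq]
  by_cases h : u = u⁻¹
  · have h1 : ((u:F) - 1) * ((u:F) + 1) = 0 := by
      have huu : u * u = 1 := by nth_rewrite 2 [h]; exact mul_inv_cancel u
      have : (u:F) * (u:F) = 1 := by
        simpa [← Units.val_mul] using congrArg Units.val huu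
      linear_combination this
    have hcond : f u = 2 ∨ f u = -2 := by
      rcases mul_eq_zero.1 h1 with h2 | h2
      · left
        have : (u:F) = 1 := by linear_combination h2
        have hu : u = 1 := by ext; exact this
        rw [hu, f_one]
      · right
        have : (u:F) = -1 := by linear_combination h2
        have hu : u = -1 := by ext; simpa using this
        rw [hu, f_negone]
    rw [if_pos hcond, ← h]; simp
  · rw [Finset.card_insert_of_notMem (by simpa using h), Finset.card_singleton]
    have hcond : ¬ (f u = 2 ∨ f u = -2) := by
      rintro (h2 | h2)
      · have : f (1:Fˣ) = f u := by rw [h2, f_one]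
        rcases (f_eq_iff u 1).1 this with h1 | h1
        · exact h (by rw [← h1]; norm_num)
        · have hu : u = 1 := inv_eq_one.1 h1.symm
          exact h (by rw [hu]; norm_num)
      · have : f (-1:Fˣ) = f u := by rw [h2, f_negone]
        rcases (f_eq_iff u (-1)).1 this with h1 | h1
        · exact h (by rw [← h1]; norm_num)
        · have hu : u = -1 := by rw [← inv_inv u, ← h1]; norm_num
          exact h (by rw [hu]; norm_num)
    rw [if_neg hcond]

lemma two_ne_zero_F (hq : Odd (Fintype.card F)) : (2:F) ≠ 0 := by
  intro h
  have hd : ringChar F ∣ 2 := ringChar.dvd (by exact_mod_cast h)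
  have hchar : ringChar F = 2 :=
    ((Nat.dvd_prime Nat.prime_two).1 hd).resolve_left CharP.ringChar_ne_one
  have := FiniteField.even_card_of_char_two hchar
  rw [Nat.odd_iff] at hq
  omega

lemma card_image_f (hq : Odd (Fintype.card F)) :
    2 * (Finset.image f (univ : Finset Fˣ)).card = Fintype.card F + 1 := by
  classical
  have h2 : (2:F) ≠ 0 := two_ne_zero_F hq
  set S := Finset.image f (univ : Finset Fˣ) with hS
  have hsum : (univ : Finset Fˣ).card = ∑ t ∈ S, (univ.filter (fun u => f u = t)).card :=
    Finset.card_eq_sum_card_fiberwise (by intro x _; exact Finset.mem_image_of_mem f (mem_univ x))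
  have hterm : ∀ t ∈ S, (univ.filter (fun u => f u = t)).card = if t = 2 ∨ t = -2 then 1 else 2 := by
    intro t ht
    obtain ⟨u, _, rfl⟩ := Finset.mem_image.1 ht
    exact fiber_card u
  rw [Finset.sum_congr rfl hterm] at hsum
  rw [Finset.sum_ite, Finset.sum_const, Finset.sum_const, smul_eq_mul, smul_eq_mul] at hsum
  have hfilt : S.filter (fun t => t = 2 ∨ t = -2) = {(2:F), -2} := by
    ext t
    simp only [Finset.mem_filter, Finset.mem_insert, Finset.mem_singleton]
    constructor
    · rintro ⟨_, h⟩; exact h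
    · rintro (rfl | rfl)
      · exact ⟨by rw [← f_one]; exact Finset.mem_image_of_mem f (mem_univ 1), Or.inl rfl⟩
      · exact ⟨by rw [← f_negone]; exact Finset.mem_image_of_mem f (mem_univ (-1)), Or.inr rfl⟩
  have h2ne : (2:F) ≠ -2 := by
    intro h
    apply h2
    have h4 : (2:F) * 2 = 0 := by linear_combination h
    exact mul_self_eq_zero.1 h4
  have hc1 : (S.filter (fun t => t = 2 ∨ t = -2)).card = 2 := by
    rw [hfilt, Finset.card_insert_of_notMem (by simpa using h2ne), Finset.card_singleton]
  have hc2 : (S.filter (fun t => ¬(t = 2 ∨ t = -2))).card = S.card - 2 := by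
    have := Finset.card_filter_add_card_filter_not (s := S) (p := fun t => t = 2 ∨ t = -2)
    omega
  rw [hc1, hc2] at hsum
  have hcardU : (univ : Finset Fˣ).card = Fintype.card F - 1 := by
    rw [Finset.card_univ, Fintype.card_units]
  have hq1 : 1 ≤ Fintype.card F := Fintype.card_pos
  have hS2 : 2 ≤ S.card := by
    have hsub : ({(2:F), -2} : Finset F) ⊆ S := by rw [← hfilt]; exact Finset.filter_subset _ _
    calc 2 = ({(2:F), -2} : Finset F).card := by
            rw [Finset.card_insert_of_notMem (by simpa using h2ne), Finset.card_singleton]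
      _ ≤ S.card := Finset.card_le_card hsub
  omega

/-- the polynomial `X² - tX + 1`. -/
noncomputable def Pt (t : F) : F[X] := X^2 - C t * X + 1

lemma Pt_natDegree (t : F) : (Pt t).natDegree = 2 := by
  have : Pt t = C 1 * X^2 + C (-t) * X + C 1 := by unfold Pt; simp [map_neg]; ring
  rw [this, Polynomial.natDegree_quadratic one_ne_zero]

lemma Pt_irr_iff (t : F) : Irreducible (Pt t) ↔ ∀ u : Fˣ, (u : F) + (u⁻¹ : Fˣ) ≠ t := by
  rw [Polynomial.irreducible_iff_roots_eq_zero_of_degree_le_three (by rw [Pt_natDegree])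
    (by rw [Pt_natDegree]; norm_num)]
  have hne : Pt t ≠ 0 := fun h => by simpa [h] using Pt_natDegree t
  rw [Multiset.eq_zero_iff_forall_notMem]
  constructor
  · intro h u hu
    apply h (u : F)
    rw [mem_roots hne, IsRoot.def]
    simp only [Pt, eval_add, eval_sub, eval_mul, eval_pow, eval_X, eval_C, eval_one]
    have : (u:F) * ((u:F) + (u⁻¹:Fˣ)) = (u:F)^2 + 1 := by
      rw [mul_add]; congr 1; · ring
      · rw [← Units.val_mul, mul_inv_cancel, Units.val_one]
    rw [hu] at this
    linear_combination -this
  · intro h x hx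
    rw [mem_roots hne, IsRoot.def] at hx
    simp only [Pt, eval_add, eval_sub, eval_mul, eval_pow, eval_X, eval_C, eval_one] at hx
    have hx0 : x ≠ 0 := by rintro rfl; simp at hx
    refine h (Units.mk0 x hx0) ?_
    have : (Units.mk0 x hx0)⁻¹ = Units.mk0 x⁻¹ (inv_ne_zero hx0) := by
      ext; simp
    rw [this]
    simp only [Units.val_mk0]
    field_simp
    linear_combination hx

lemma card_irr (hq : Odd (Fintype.card F)) :
    Nat.card {t : F // Irreducible (Pt t)} = (Fintype.card F - 1) / 2 := by
  classical
  rw [Nat.card_eq_fintype_card, Fintype.card_subtype]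
  have hset : univ.filter (fun t : F => Irreducible (Pt t))
      = univ \ Finset.image f univ := by
    ext t
    simp only [Finset.mem_filter, Finset.mem_univ, true_and, Finset.mem_sdiff, Finset.mem_image]
    rw [Pt_irr_iff]
    constructor
    · intro h
      rintro ⟨u, hu⟩
      exact h u hu
    · intro h u hu
      exact h ⟨u, hu⟩
  rw [hset, Finset.card_sdiff_of_subset (Finset.subset_univ _), Finset.card_univ]
  have h2 := card_image_f hq
  rw [Nat.odd_iff] at hq
  omega

lemma cp2 (M : Matrix (Fin 2) (Fin 2) F) :
    M.charpoly = X^2 - C M.trace * X + C M.det := by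
  rw [Matrix.charpoly, Matrix.det_fin_two, Matrix.trace_fin_two, Matrix.det_fin_two]
  simp [charmatrix_apply_eq, charmatrix_apply_ne]
  ring

/-- the companion matrix of `X² - tX + 1`. -/
def cmat (t : F) : Matrix (Fin 2) (Fin 2) F := !![0, -1; 1, t]

lemma cmat_det (t : F) : (cmat t).det = 1 := by simp [cmat, Matrix.det_fin_two_of]

lemma cmat_trace (t : F) : (cmat t).trace = t := by simp [cmat, Matrix.trace_fin_two]

noncomputable def cgl (t : F) : GL (Fin 2) F :=
  Matrix.GeneralLinearGroup.mkOfDetNeZero (cmat t) (by rw [cmat_det]; exact one_ne_zero)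

lemma cgl_val (t : F) : (cgl t : Matrix (Fin 2) (Fin 2) F) = cmat t := rfl

lemma cgl_charpoly (t : F) : Matrix.charpoly (cgl t : Matrix (Fin 2) (Fin 2) F) = Pt t := by
  rw [cgl_val, cp2, cmat_det, cmat_trace, Polynomial.C_1, Pt]

lemma entry_ne_zero (A : GL (Fin 2) F)
    (h : Irreducible (Matrix.charpoly (A : Matrix (Fin 2) (Fin 2) F))) :
    (A : Matrix (Fin 2) (Fin 2) F) 1 0 ≠ 0 := by
  intro hc
  set M := (A : Matrix (Fin 2) (Fin 2) F)
  have hdeg : M.charpoly.natDegree = 2 := by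
    rw [Matrix.charpoly_natDegree_eq_dim, Fintype.card_fin]
  have hroots := (Polynomial.irreducible_iff_roots_eq_zero_of_degree_le_three
    (by rw [hdeg]) (by rw [hdeg]; norm_num)).1 h
  have hne : M.charpoly ≠ 0 := (Matrix.charpoly_monic M).ne_zero
  have hroot : (M.charpoly).IsRoot (M 0 0) := by
    rw [cp2, IsRoot.def]
    simp only [eval_add, eval_sub, eval_mul, eval_pow, eval_X, eval_C]
    rw [Matrix.trace_fin_two, Matrix.det_fin_two, hc]
    ring
  have : M 0 0 ∈ M.charpoly.roots := (Polynomial.mem_roots hne).2 hroot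
  rw [hroots] at this
  exact absurd this (Multiset.notMem_zero _)

lemma conj_to_companion (A : GL (Fin 2) F)
    (hdet : Matrix.det (A : Matrix (Fin 2) (Fin 2) F) = 1)
    (h : Irreducible (Matrix.charpoly (A : Matrix (Fin 2) (Fin 2) F))) :
    ∃ P : GL (Fin 2) F,
      P * cgl (Matrix.trace (A : Matrix (Fin 2) (Fin 2) F)) * P⁻¹ = A := by
  set M := (A : Matrix (Fin 2) (Fin 2) F) with hM
  have hc : M 1 0 ≠ 0 := entry_ne_zero A h
  set Pm : Matrix (Fin 2) (Fin 2) F := !![1, M 0 0; 0, M 1 0] with hPm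
  have hPdet : Pm.det ≠ 0 := by
    rw [hPm, Matrix.det_fin_two_of]; simpa using hc
  set mkP := Matrix.GeneralLinearGroup.mkOfDetNeZero Pm hPdet with hmkP
  refine ⟨mkP, ?_⟩
  have hdet2 : M 0 0 * M 1 1 - M 0 1 * M 1 0 = 1 := by
    rw [← Matrix.det_fin_two]; exact hdet
  have key : Pm * cmat M.trace = M * Pm := by
    ext i j
    fin_cases i <;> fin_cases j <;>
      simp [hPm, cmat, Matrix.trace_fin_two, Matrix.mul_apply, Fin.sum_univ_two]
    · linear_combination hdet2
    · ring
  have h3 : Pm * ((mkP)⁻¹).val = 1 := by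
    have h4 := congrArg Units.val (mul_inv_cancel mkP)
    rw [Units.val_mul, Units.val_one] at h4
    exact h4
  apply Units.ext
  show Pm * (cmat M.trace) * ((mkP)⁻¹).val = M
  rw [key, mul_assoc, h3, mul_one]

end AuxC1C4
end AuxC1C4


open Matrix

variable (F : Type*) [Field F] [Fintype F] [DecidableEq F]

open AuxC1C4 in
lemma mem_GL22_of_det_eq (A B : GL (Fin 2) F)
    (h : Matrix.det (A : Matrix (Fin 2) (Fin 2) F) = Matrix.det (B : Matrix (Fin 2) (Fin 2) F)) :
    (A, B) ∈ GL22 F := by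
  show Matrix.GeneralLinearGroup.det A = Matrix.GeneralLinearGroup.det B
  exact Units.ext h

open AuxC1C4 in
lemma one_pair_mem (A : GL (Fin 2) F)
    (hA : Matrix.det (A : Matrix (Fin 2) (Fin 2) F) = 1) :
    ((1 : GL (Fin 2) F), A) ∈ GL22 F := by
  apply mem_GL22_of_det_eq
  rw [hA]
  show Matrix.det (1 : Matrix (Fin 2) (Fin 2) F) = 1
  exact Matrix.det_one

open AuxC1C4 in
lemma cls_conj_of_conj (pA pB : GL22 F) (A B P : GL (Fin 2) F)
    (hA : pA.val = (1, A)) (hB : pB.val = (1, B)) (hP : P * A * P⁻¹ = B) :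
    ConjClasses.mk (cls F pA) = ConjClasses.mk (cls F pB) := by
  set d : Fˣ := Matrix.GeneralLinearGroup.det P with hd
  have hgdet : Matrix.det (!![(d:F), 0; 0, 1]) = (d : F) := by
    rw [Matrix.det_fin_two_of]; ring
  set g : GL (Fin 2) F := Matrix.GeneralLinearGroup.mkOfDetNeZero !![(d:F), 0; 0, 1]
    (by rw [hgdet]; exact d.ne_zero) with hg
  have hmem : (g, P) ∈ GL22 F := by
    apply mem_GL22_of_det_eq
    show Matrix.det (!![(d:F), 0; 0, 1]) = Matrix.det (P : Matrix (Fin 2) (Fin 2) F)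
    rw [hgdet]
    rfl
  set r : GL22 F := ⟨(g, P), hmem⟩ with hr
  have hconj : r * pA * r⁻¹ = pB := by
    apply Subtype.ext
    have hv : (r * pA * r⁻¹).val = r.val * pA.val * (r.val)⁻¹ := rfl
    rw [hv, hr, hA, hB]
    apply Prod.ext
    · show g * 1 * g⁻¹ = 1
      rw [mul_one, mul_inv_cancel]
    · show P * A * P⁻¹ = B
      exact hP
  rw [ConjClasses.mk_eq_mk_iff_isConj, isConj_iff]
  refine ⟨cls F r, ?_⟩
  rw [← hconj]
  show QuotientGroup.mk r * QuotientGroup.mk pA * (QuotientGroup.mk r)⁻¹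
      = QuotientGroup.mk (r * pA * r⁻¹)
  rfl

open AuxC1C4 in
lemma trace_eq_of_cls_conj (pA pB : GL22 F) (A B : GL (Fin 2) F)
    (hA : pA.val = (1, A)) (hB : pB.val = (1, B))
    (h : ConjClasses.mk (cls F pA) = ConjClasses.mk (cls F pB)) :
    Matrix.trace (A : Matrix (Fin 2) (Fin 2) F) = Matrix.trace (B : Matrix (Fin 2) (Fin 2) F) := by
  rw [ConjClasses.mk_eq_mk_iff_isConj, isConj_iff] at h
  obtain ⟨q, hq⟩ := h
  obtain ⟨r, rfl⟩ := QuotientGroup.mk_surjective q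
  have hq' : (QuotientGroup.mk (r * pA * r⁻¹) : SO4 F) = QuotientGroup.mk pB := by
    rw [QuotientGroup.mk_mul, QuotientGroup.mk_mul, QuotientGroup.mk_inv]
    exact hq
  rw [QuotientGroup.eq] at hq'
  obtain ⟨a, ha⟩ := hq'
  have hval := congrArg Subtype.val ha
  have hfst := congrArg Prod.fst hval
  have hsnd := congrArg Prod.snd hval
  have hA1 : pA.val.1 = 1 := by rw [hA]
  have hA2 : pA.val.2 = A := by rw [hA]
  have hB1 : pB.val.1 = 1 := by rw [hB]
  have hB2 : pB.val.2 = B := by rw [hB]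
  set g : GL (Fin 2) F := r.val.1 with hgdef
  set hh : GL (Fin 2) F := r.val.2 with hhdef
  -- first components
  have hfst' : sc F a = (g * pA.val.1 * g⁻¹)⁻¹ * pB.val.1 := hfst
  rw [hA1, hB1] at hfst'
  simp only [mul_one, mul_inv_cancel, inv_one, one_mul] at hfst'
  have ha1 : (a : F) = 1 := by
    have := congrArg (fun u : GL (Fin 2) F => (u : Matrix (Fin 2) (Fin 2) F) 0 0) hfst'
    simpa [sc] using this
  have haa : a = 1 := Units.ext ha1
  have hsnd' : sc F a = (hh * pA.val.2 * hh⁻¹)⁻¹ * pB.val.2 := hsnd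
  rw [hA2, hB2, haa] at hsnd'
  have hsc1 : sc F (1 : Fˣ) = 1 := by
    apply Units.ext
    simp [sc]
  rw [hsc1] at hsnd'
  have hBA : B = hh * A * hh⁻¹ := by
    have := hsnd'.symm
    rw [inv_mul_eq_one] at this
    exact this.symm
  have hfin : (hh⁻¹).val * (hh.val * A.val) = A.val := by
    rw [← mul_assoc, ← Units.val_mul, inv_mul_cancel, Units.val_one, one_mul]
  rw [hBA]
  show Matrix.trace (A.val) = Matrix.trace ((hh.val * A.val) * (hh⁻¹).val)
  rw [Matrix.trace_mul_comm, hfin]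

/-- The number of conjugacy classes of `SO₄(F)` containing an element of the form `[(I₂, A)]`
with `det A = 1` and `A` having irreducible characteristic polynomial is exactly `(q-1)/2`. -/
theorem card_c1c4_classes (hq : Odd (Fintype.card F)) :
    Nat.card {c : ConjClasses (SO4 F) // ∃ p : GL22 F, ∃ A : GL (Fin 2) F,
        Matrix.det (A : Matrix (Fin 2) (Fin 2) F) = 1 ∧
        Irreducible (Matrix.charpoly (A : Matrix (Fin 2) (Fin 2) F)) ∧
        p.val = (1, A) ∧
        c = ConjClasses.mk (cls F p)} = (Fintype.card F - 1) / 2 := by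
  classical
  have hdet1 : ∀ t : F, Matrix.det ((AuxC1C4.cgl t : GL (Fin 2) F) : Matrix (Fin 2) (Fin 2) F) = 1 :=
    fun t => by rw [AuxC1C4.cgl_val]; exact AuxC1C4.cmat_det t
  set pC : F → GL22 F := fun t => ⟨(1, AuxC1C4.cgl t), one_pair_mem F (AuxC1C4.cgl t) (hdet1 t)⟩
    with hpC
  set Φ : {t : F // Irreducible (AuxC1C4.Pt t)} → {c : ConjClasses (SO4 F) // ∃ p : GL22 F,
      ∃ A : GL (Fin 2) F,
      Matrix.det (A : Matrix (Fin 2) (Fin 2) F) = 1 ∧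
      Irreducible (Matrix.charpoly (A : Matrix (Fin 2) (Fin 2) F)) ∧
      p.val = (1, A) ∧
      c = ConjClasses.mk (cls F p)} := fun t =>
    ⟨ConjClasses.mk (cls F (pC t.val)), pC t.val, AuxC1C4.cgl t.val, hdet1 _,
      (by rw [AuxC1C4.cgl_charpoly]; exact t.2), rfl, rfl⟩ with hPhi
  have hbij : Function.Bijective Φ := by
    constructor
    · intro t t' heq
      have h := congrArg Subtype.val heq
      have htr := trace_eq_of_cls_conj F (pC t.val) (pC t'.val) (AuxC1C4.cgl t.val)
        (AuxC1C4.cgl t'.val) rfl rfl h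
      rw [AuxC1C4.cgl_val, AuxC1C4.cgl_val, AuxC1C4.cmat_trace, AuxC1C4.cmat_trace] at htr
      exact Subtype.ext htr
    · rintro ⟨c, p, A, h1, h2, h3, h4⟩
      set t := Matrix.trace (A : Matrix (Fin 2) (Fin 2) F) with ht
      have hcp : Matrix.charpoly (A : Matrix (Fin 2) (Fin 2) F) = AuxC1C4.Pt t := by
        rw [AuxC1C4.cp2, h1, Polynomial.C_1, ← ht]
        rfl
      have hPt : Irreducible (AuxC1C4.Pt t) := hcp ▸ h2
      obtain ⟨P, hP⟩ := AuxC1C4.conj_to_companion A h1 h2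
      refine ⟨⟨t, hPt⟩, ?_⟩
      apply Subtype.ext
      show ConjClasses.mk (cls F (pC t)) = c
      rw [h4]
      exact cls_conj_of_conj F (pC t) p (AuxC1C4.cgl t) A P rfl h3 hP
  rw [← Nat.card_eq_of_bijective Φ hbij]
  exact AuxC1C4.card_irr hq
end
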